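/- arXiv:1911.09105 — 9 statements merged into one kernel-verified Lean document; each statement's English description precedes it below -/
import Mathlib

section
/- Let P_{X,Y} ∈ 𝒫^{𝒳×𝒴}, set K = min(|𝒳|,|𝒴|), let B̃ be its canonical dependence matrix, and fix k ∈ {1,…,K−1}. Consider all pairs of feature maps f = (f₁,…,f_k): 𝒳 → ℝ^k and g = (g₁,…,g_k): 𝒴 → ℝ^k satisfying Σ_x P_X(x) f(x) = 0, Σ_y P_Y(y) g(y) = 0, Σ_x P_X(x) f(x)f(x)ᵀ = I_k and Σ_y P_Y(y) g(y)g(y)ᵀ = I_k. Over this (nonempty) set, the maximum of Σ_{i=1}^k Σ_{x,y} P_{X,Y}(x,y) f_i(x) g_i(y) is attained and equals Σ_{i=1}^k σ_i(B̃) (the Ky Fan k-norm of B̃); equivalently, the minimum of Σ_{x,y} P_{X,Y}(x,y)·‖f(x) − g(y)‖² over the same set is attained and equals 2k − 2·Σ_{i=1}^k σ_i(B̃). -/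
/-!
Put `φᵢ = √P_X · fᵢ` and `ψᵢ = √P_Y · gᵢ`. The constraints say exactly that `(φᵢ)` and `(ψᵢ)` are
orthonormal families orthogonal to `√P_X` and `√P_Y`, and since `B̃ √P_X = 0` and `B̃ᵀ √P_Y = 0`
the objective is `∑ᵢ ⟪ψᵢ, B̃ φᵢ⟫`.

Expanding along right singular vectors `wⱼ` and left singular vectors `zⱼ` gives
`∑ᵢ ⟪ψᵢ, B̃ φᵢ⟫ = ∑ⱼ σⱼ ∑ᵢ aᵢⱼ bᵢⱼ` with `aᵢⱼ = ⟪wⱼ, φᵢ⟫` and `bᵢⱼ = ⟪zⱼ, ψᵢ⟫`. By AM-GM and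
Bessel's inequality, the weights `cⱼ = ∑ᵢ (aᵢⱼ² + bᵢⱼ²) / 2` lie in `[0, 1]` and add up to at
most `k`, so the objective is at most `σ₀ + ⋯ + σₖ₋₁` (Ky Fan). The top `k` singular pairs with
`σⱼ > 0` are automatically orthogonal to `√P_X` and `√P_Y`. If fewer than `k` such pairs exist,
the families are completed orthonormally inside those orthogonal complements, which attains the
bound. Finally, `∑ P ‖f(x) - g(y)‖² = 2k - 2 ∑ᵢ E[fᵢ gᵢ]`.
-/

open Matrix

/-- The `i`-th largest element (0-indexed) of a finite family of real numbers
(by convention `0` if `i` is out of range). -/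
noncomputable def ithLargest {ι : Type*} [Fintype ι] (f : ι → ℝ) (i : ℕ) : ℝ :=
  (((Finset.univ.val.map f).sort (· ≤ ·)).reverse).getD i 0

/-- The `i`-th largest singular value (0-indexed) of a real matrix `A`: the square root of
the `i`-th largest eigenvalue of `Aᴴ * A` (over `ℝ`, `Aᴴ = Aᵀ`). -/
noncomputable def singularValue {m n : Type*} [Fintype m] [Fintype n] [DecidableEq n]
    (A : Matrix m n ℝ) (i : ℕ) : ℝ :=
  Real.sqrt (ithLargest (Matrix.isHermitian_conjTranspose_mul_self A).eigenvalues i)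

open Module Finset
open scoped RealInnerProductSpace

section ithLargest

variable {ι : Type*} [Fintype ι]

lemma ithLargest_of_card_le (f : ι → ℝ) {i : ℕ} (hi : Fintype.card ι ≤ i) :
    ithLargest f i = 0 := by
  rw [ithLargest, List.getD_eq_default]
  simpa using hi

lemma ithLargest_comp_symm_of_antitone {n : ℕ} {d : Fin n → ℝ} (hd : Antitone d) (e : Fin n ≃ ι)
    (i : Fin n) : ithLargest (d ∘ e.symm) i = d i := by
  have hmap : univ.val.map (d ∘ e.symm) = ↑(List.ofFn d).reverse := by
    rw [Multiset.coe_reverse, ← Fin.univ_val_map, ← Multiset.map_map, Multiset.map_univ_val_equiv]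
  have hsort : (↑(List.ofFn d).reverse : Multiset ℝ).sort (· ≤ ·) = (List.ofFn d).reverse := by
    rw [Multiset.coe_sort]
    apply List.mergeSort_of_pairwise
    simpa [List.pairwise_reverse] using fun i j h => hd (le_of_lt h)
  rw [ithLargest, hmap, hsort, List.reverse_reverse, List.getD_eq_getElem _ _ (by simp),
    List.getElem_ofFn]

end ithLargest

lemma LinearMap.IsSymmetric.eigenvalues_congr {𝕜 E : Type*} [RCLike 𝕜] [NormedAddCommGroup E]
    [InnerProductSpace 𝕜 E] [FiniteDimensional 𝕜 E] {S T : E →ₗ[𝕜] E} (h : S = T)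
    (hS : S.IsSymmetric) (hT : T.IsSymmetric) {n : ℕ} (hn : finrank 𝕜 E = n) :
    hS.eigenvalues hn = hT.eigenvalues hn := by
  subst h; rfl

theorem singularValue_eq_singularValues_toEuclideanLin {X Y : Type*} [Fintype X] [Fintype Y]
    [DecidableEq X] (B : Matrix Y X ℝ) (i : ℕ) :
    singularValue B i = (toEuclideanLin B).singularValues i := by
  classical
  have hM := isHermitian_conjTranspose_mul_self B
  rcases lt_or_ge i (Fintype.card X) with hi | hi
  · have hmul : (toEuclideanLin B).adjoint ∘ₗ toEuclideanLin B = toEuclideanLin (Bᴴ * B) := by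
      rw [← toEuclideanLin_conjTranspose_eq_adjoint]
      exact (toLpLin_mul_same 2 _ _).symm
    calc singularValue B i = √(hM.eigenvalues₀ ⟨i, hi⟩) :=
          congrArg Real.sqrt <| ithLargest_comp_symm_of_antitone hM.eigenvalues₀_antitone
            (Fintype.equivOfCardEq (Fintype.card_fin _)) ⟨i, hi⟩
      _ = (toEuclideanLin B).singularValues i := by
          rw [(toEuclideanLin B).singularValues_of_lt finrank_euclideanSpace hi,
            IsHermitian.eigenvalues₀, LinearMap.IsSymmetric.eigenvalues_congr hmul]
  · rw [singularValue, ithLargest_of_card_le _ hi, Real.sqrt_zero,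
      LinearMap.singularValues_of_finrank_le]
    simpa using hi

lemma Orthonormal.sum_inner_sq_le {ι E : Type*} [Fintype ι] [NormedAddCommGroup E]
    [InnerProductSpace ℝ E] {v : ι → E} (hv : Orthonormal ℝ v) (x : E) :
    ∑ i, ⟪v i, x⟫ ^ 2 ≤ ‖x‖ ^ 2 := by
  simpa [Real.norm_eq_abs, sq_abs] using hv.sum_inner_products_le x (s := univ)

section Extension

variable {𝕜 E : Type*} [RCLike 𝕜] [NormedAddCommGroup E] [InnerProductSpace 𝕜 E]
  [FiniteDimensional 𝕜 E] {k : ℕ} {v : Fin k → E} {s : Set (Fin k)}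

lemma Orthonormal.exists_orthonormal_extension_fin (hv : Orthonormal 𝕜 (s.domRestrict v))
    (hk : k ≤ finrank 𝕜 E) : ∃ φ : Fin k → E, Orthonormal 𝕜 φ ∧ ∀ i ∈ s, φ i = v i := by
  let v' : Fin (finrank 𝕜 E) → E := fun j => if h : (j : ℕ) < k then v ⟨j, h⟩ else 0
  have hv' : Orthonormal 𝕜 ((Fin.castLE hk '' s).domRestrict v') := by
    rw [orthonormal_iff_ite] at hv ⊢
    rintro ⟨_, i, hi, rfl⟩ ⟨_, j, hj, rfl⟩
    simpa [v', Subtype.ext_iff, (Fin.castLE_injective hk).eq_iff] using hv ⟨i, hi⟩ ⟨j, hj⟩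
  obtain ⟨b, hb⟩ := hv'.exists_orthonormalBasis_extension_of_card_eq (by simp)
  refine ⟨b ∘ Fin.castLE hk, b.orthonormal.comp _ (Fin.castLE_injective hk), fun i hi => ?_⟩
  simpa [v'] using hb _ ⟨i, hi, rfl⟩

lemma Orthonormal.exists_orthonormal_extension_fin_of_mem (hv : Orthonormal 𝕜 (s.domRestrict v))
    {K : Submodule 𝕜 E} (hvK : ∀ i ∈ s, v i ∈ K) (hk : k ≤ finrank 𝕜 K) :
    ∃ φ : Fin k → E, Orthonormal 𝕜 φ ∧ (∀ i, φ i ∈ K) ∧ ∀ i ∈ s, φ i = v i := by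
  let vK : Fin k → K := fun i => K.orthogonalProjectionOnto (v i)
  have hvK' : ∀ i ∈ s, (vK i : E) = v i := fun i hi =>
    Submodule.starProjection_eq_self_iff.2 (hvK i hi)
  have hvK_on : Orthonormal 𝕜 (s.domRestrict vK) := by
    rw [← K.subtypeₗᵢ.orthonormal_comp_iff]
    convert hv using 1
    ext ⟨i, hi⟩
    exact hvK' i hi
  obtain ⟨φ, hφ, hφs⟩ := hvK_on.exists_orthonormal_extension_fin hk
  exact ⟨fun i => φ i, K.subtypeₗᵢ.orthonormal_comp_iff.2 hφ, fun i => (φ i).2,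
    fun i hi => by simp [hφs i hi, hvK' i hi]⟩

end Extension

lemma sum_mul_le_sum_range_of_antitone {n k : ℕ} {σ : ℕ → ℝ} (hσ : Antitone σ)
    (hσ0 : ∀ i, 0 ≤ σ i) {c : Fin n → ℝ} (hc0 : ∀ j, 0 ≤ c j) (hc1 : ∀ j, c j ≤ 1)
    (hck : ∑ j, c j ≤ k) : ∑ j, c j * σ j ≤ ∑ i ∈ range k, σ i := by
  -- Measured against the threshold `σₖ`, only the indices `j < k` can contribute a surplus.
  have hexcess : ∀ j : Fin n, c j * (σ j - σ k) ≤ if (j : ℕ) < k then σ j - σ k else 0 := by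
    intro j
    split_ifs with hj
    · exact mul_le_of_le_one_left (sub_nonneg.2 (hσ hj.le)) (hc1 j)
    · exact mul_nonpos_of_nonneg_of_nonpos (hc0 j) (sub_nonpos.2 (hσ (not_lt.1 hj)))
  have hsplit :
      ∑ j : Fin n, (if (j : ℕ) < k then σ j - σ k else 0) ≤ ∑ i ∈ range k, (σ i - σ k) := by
    rw [Fin.sum_univ_eq_sum_range (fun i => if i < k then σ i - σ k else 0), ← sum_filter]
    refine sum_le_sum_of_subset_of_nonneg (fun i hi => ?_) fun i hi _ => ?_
    · simpa using (mem_filter.1 hi).2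
    · exact sub_nonneg.2 (hσ (mem_range.1 hi).le)
  calc ∑ j, c j * σ j = ∑ j, c j * (σ j - σ k) + (∑ j, c j) * σ k := by
        rw [sum_mul, ← sum_add_distrib]
        exact sum_congr rfl fun j _ => by ring
    _ ≤ ∑ i ∈ range k, (σ i - σ k) + k * σ k :=
        add_le_add ((sum_le_sum fun j _ => hexcess j).trans hsplit)
          (mul_le_mul_of_nonneg_right hck (hσ0 k))
    _ = ∑ i ∈ range k, σ i := by simp [sum_sub_distrib]

namespace LinearMap

variable {E F : Type*} [NormedAddCommGroup E] [InnerProductSpace ℝ E] [FiniteDimensional ℝ E]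
  [NormedAddCommGroup F] [InnerProductSpace ℝ F] [FiniteDimensional ℝ F] (T : E →ₗ[ℝ] F)

noncomputable abbrev rightSingularBasis : OrthonormalBasis (Fin (finrank ℝ E)) ℝ E :=
  T.isSymmetric_adjoint_comp_self.eigenvectorBasis rfl

/-- When `σⱼ = 0` this is `0⁻¹ • T wⱼ = 0`, and `T wⱼ = 0` as well, so `T wⱼ = σⱼ • zⱼ` holds
for every `j`. -/
noncomputable def leftSingularVector (j : Fin (finrank ℝ E)) : F :=
  (T.singularValues j)⁻¹ • T (T.rightSingularBasis j)

lemma adjoint_apply_rightSingularBasis (j : Fin (finrank ℝ E)) :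
    adjoint T (T (T.rightSingularBasis j)) = T.singularValues j ^ 2 • T.rightSingularBasis j := by
  rw [T.sq_singularValues_fin rfl j]
  exact T.isSymmetric_adjoint_comp_self.apply_eigenvectorBasis rfl j

lemma inner_apply_rightSingularBasis (i j : Fin (finrank ℝ E)) :
    ⟪T (T.rightSingularBasis i), T (T.rightSingularBasis j)⟫ =
      if i = j then T.singularValues j ^ 2 else 0 := by
  rw [← adjoint_inner_right, adjoint_apply_rightSingularBasis, inner_smul_right,
    orthonormal_iff_ite.1 T.rightSingularBasis.orthonormal i j]
  simp

lemma apply_rightSingularBasis (j : Fin (finrank ℝ E)) :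
    T (T.rightSingularBasis j) = T.singularValues j • T.leftSingularVector j := by
  rcases (T.singularValues_nonneg j).eq_or_lt with h | h
  · have : ‖T (T.rightSingularBasis j)‖ ^ 2 = 0 := by
      rw [← real_inner_self_eq_norm_sq, inner_apply_rightSingularBasis, if_pos rfl, ← h]
      norm_num
    simpa [← h] using this
  · rw [leftSingularVector, smul_inv_smul₀ h.ne']

lemma orthonormal_leftSingularVector :
    Orthonormal ℝ fun j : {j : Fin (finrank ℝ E) // 0 < T.singularValues j} =>
      T.leftSingularVector j := by
  rw [orthonormal_iff_ite]
  rintro ⟨i, hi⟩ ⟨j, hj⟩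
  simp only [leftSingularVector, real_inner_smul_left, real_inner_smul_right,
    inner_apply_rightSingularBasis, Subtype.mk.injEq]
  split_ifs with h
  · subst h
    field_simp
  · simp

lemma sum_inner_leftSingularVector_sq_le (y : F) :
    ∑ j, ⟪T.leftSingularVector j, y⟫ ^ 2 ≤ ‖y‖ ^ 2 := by
  classical
  calc ∑ j : Fin (finrank ℝ E), ⟪T.leftSingularVector j, y⟫ ^ 2
      = ∑ j ∈ univ.filter fun j : Fin (finrank ℝ E) => 0 < T.singularValues j,
          ⟪T.leftSingularVector j, y⟫ ^ 2 := by
        refine (sum_filter_of_ne fun j _ hj => ?_).symm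
        contrapose! hj
        simp [leftSingularVector, hj.antisymm (T.singularValues_nonneg j)]
    _ = ∑ j : {j : Fin (finrank ℝ E) // 0 < T.singularValues j},
          ⟪T.leftSingularVector j, y⟫ ^ 2 :=
        sum_subtype _ (by simp) _
    _ ≤ ‖y‖ ^ 2 := T.orthonormal_leftSingularVector.sum_inner_sq_le y

lemma inner_apply_eq_sum (x : E) (y : F) :
    ⟪y, T x⟫ = ∑ j, ⟪T.rightSingularBasis j, x⟫ * ⟪T.leftSingularVector j, y⟫ *
      T.singularValues j := by
  conv_lhs => rw [← T.rightSingularBasis.sum_repr' x]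
  simp only [map_sum, map_smul, apply_rightSingularBasis, inner_sum, inner_smul_right,
    real_inner_comm y]
  exact sum_congr rfl fun j _ => by ring

lemma norm_leftSingularVector_le_one (j : Fin (finrank ℝ E)) : ‖T.leftSingularVector j‖ ≤ 1 := by
  rcases (T.singularValues_nonneg j).eq_or_lt with h | h
  · simp [leftSingularVector, ← h]
  · exact (T.orthonormal_leftSingularVector.1 ⟨j, h⟩).le

lemma inner_leftSingularVector_apply_rightSingularBasis (j : Fin (finrank ℝ E)) :
    ⟪T.leftSingularVector j, T (T.rightSingularBasis j)⟫ = T.singularValues j := by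
  rcases (T.singularValues_nonneg j).eq_or_lt with h | h
  · simp [leftSingularVector, ← h]
  · rw [apply_rightSingularBasis, real_inner_smul_right, real_inner_self_eq_norm_sq,
      T.orthonormal_leftSingularVector.1 ⟨j, h⟩, one_pow, mul_one]

lemma inner_apply_eq_zero_of_forall_inner_leftSingularVector {y : F}
    (hy : ∀ j : Fin (finrank ℝ E), 0 < T.singularValues j → ⟪T.leftSingularVector j, y⟫ = 0)
    (x : E) :
    ⟪y, T x⟫ = 0 := by
  rw [inner_apply_eq_sum]
  refine sum_eq_zero fun j _ => ?_
  rcases (T.singularValues_nonneg j).eq_or_lt with h | h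
  · rw [← h, mul_zero]
  · rw [hy j h, mul_zero, zero_mul]

theorem sum_inner_apply_le_sum_singularValues {k : ℕ} {φ : Fin k → E} {ψ : Fin k → F}
    (hφ : Orthonormal ℝ φ) (hψ : Orthonormal ℝ ψ) :
    ∑ i, ⟪ψ i, T (φ i)⟫ ≤ ∑ i ∈ Finset.range k, T.singularValues i := by
  set a : Fin k → Fin (finrank ℝ E) → ℝ := fun i j => ⟪T.rightSingularBasis j, φ i⟫
  set b : Fin k → Fin (finrank ℝ E) → ℝ := fun i j => ⟪T.leftSingularVector j, ψ i⟫
  set c : Fin (finrank ℝ E) → ℝ := fun j => ∑ i, (a i j ^ 2 + b i j ^ 2) / 2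
  have hc1 : ∀ j, c j ≤ 1 := by
    intro j
    have ha : ∑ i, a i j ^ 2 ≤ 1 := by
      simpa [a, real_inner_comm] using hφ.sum_inner_sq_le (T.rightSingularBasis j)
    have hb : ∑ i, b i j ^ 2 ≤ 1 := by
      refine (?_ : _ ≤ ‖T.leftSingularVector j‖ ^ 2).trans
        (pow_le_one₀ (norm_nonneg _) (T.norm_leftSingularVector_le_one j))
      simpa [b, real_inner_comm] using hψ.sum_inner_sq_le (T.leftSingularVector j)
    simp only [c, ← sum_div, sum_add_distrib]
    linarith
  have hck : ∑ j, c j ≤ k := by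
    have hrow : ∀ i, ∑ j, (a i j ^ 2 + b i j ^ 2) ≤ 2 := by
      intro i
      have ha := T.rightSingularBasis.orthonormal.sum_inner_sq_le (φ i)
      have hb := T.sum_inner_leftSingularVector_sq_le (ψ i)
      rw [hφ.1 i] at ha
      rw [hψ.1 i] at hb
      rw [sum_add_distrib]
      norm_num at ha hb
      linarith
    calc ∑ j, c j = ∑ i, (∑ j, (a i j ^ 2 + b i j ^ 2)) / 2 := by
          simp only [c, ← sum_div]; rw [sum_comm]
      _ ≤ ∑ i : Fin k, 1 := sum_le_sum fun i _ => by linarith [hrow i]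
      _ = k := by simp
  calc ∑ i, ⟪ψ i, T (φ i)⟫ = ∑ i, ∑ j, a i j * b i j * T.singularValues j := by
        simp only [inner_apply_eq_sum, a, b]
    _ ≤ ∑ i, ∑ j, (a i j ^ 2 + b i j ^ 2) / 2 * T.singularValues j := by
        gcongr with i _ j _
        · exact T.singularValues_nonneg j
        · nlinarith [sq_nonneg (a i j - b i j)]
    _ = ∑ j, c j * T.singularValues j := by
        rw [sum_comm]
        simp only [c, sum_mul]
    _ ≤ ∑ i ∈ Finset.range k, T.singularValues i :=
        sum_mul_le_sum_range_of_antitone T.singularValues_antitone T.singularValues_nonneg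
          (fun j => sum_nonneg fun i _ => by positivity) hc1 hck

lemma rightSingularBasis_mem_orthogonal {U : Submodule ℝ E} (hU : U ≤ ker T)
    {j : Fin (finrank ℝ E)} (hj : 0 < T.singularValues j) : T.rightSingularBasis j ∈ Uᗮ := by
  intro a ha
  have hw : T.rightSingularBasis j =
      (T.singularValues j ^ 2)⁻¹ • adjoint T (T (T.rightSingularBasis j)) := by
    rw [adjoint_apply_rightSingularBasis, inv_smul_smul₀ (by positivity)]
  rw [hw, inner_smul_right, adjoint_inner_right, hU ha, inner_zero_left, mul_zero]

lemma leftSingularVector_mem_orthogonal {V : Submodule ℝ F} (hV : V ≤ ker (adjoint T))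
    (j : Fin (finrank ℝ E)) : T.leftSingularVector j ∈ Vᗮ := by
  intro b hb
  rw [leftSingularVector, inner_smul_right, ← adjoint_inner_left, hV hb, inner_zero_left,
    mul_zero]

theorem exists_orthonormal_sum_inner_apply_eq_sum_singularValues {U : Submodule ℝ E}
    {V : Submodule ℝ F} (hU : U ≤ ker T) (hV : V ≤ ker (adjoint T)) {k : ℕ}
    (hkU : k ≤ finrank ℝ Uᗮ) (hkV : k ≤ finrank ℝ Vᗮ) :
    ∃ (φ : Fin k → E) (ψ : Fin k → F), Orthonormal ℝ φ ∧ Orthonormal ℝ ψ ∧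
      (∀ i, φ i ∈ Uᗮ) ∧ (∀ i, ψ i ∈ Vᗮ) ∧
      ∑ i, ⟪ψ i, T (φ i)⟫ = ∑ i ∈ Finset.range k, T.singularValues i := by
  have hk : k ≤ finrank ℝ E := hkU.trans (Submodule.finrank_le _)
  let s : Set (Fin k) := {i | 0 < T.singularValues i}
  have hw : Orthonormal ℝ (s.domRestrict (T.rightSingularBasis ∘ Fin.castLE hk)) :=
    (T.rightSingularBasis.orthonormal.comp _ (Fin.castLE_injective hk)).comp _
      Subtype.val_injective
  have hz : Orthonormal ℝ (s.domRestrict (T.leftSingularVector ∘ Fin.castLE hk)) :=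
    T.orthonormal_leftSingularVector.comp (fun i : s => ⟨Fin.castLE hk i, i.2⟩)
      fun i i' h => Subtype.ext (Fin.castLE_injective hk (congrArg Subtype.val h))
  obtain ⟨φ, hφ, hφU, hφs⟩ := hw.exists_orthonormal_extension_fin_of_mem
    (fun i hi => T.rightSingularBasis_mem_orthogonal hU hi) hkU
  obtain ⟨ψ, hψ, hψV, hψs⟩ := hz.exists_orthonormal_extension_fin_of_mem
    (fun i _ => T.leftSingularVector_mem_orthogonal hV _) hkV
  refine ⟨φ, ψ, hφ, hψ, hφU, hψV, ?_⟩
  rw [← Fin.sum_univ_eq_sum_range]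
  refine sum_congr rfl fun i _ => ?_
  by_cases hi : i ∈ s
  · rw [hφs i hi, hψs i hi]
    exact T.inner_leftSingularVector_apply_rightSingularBasis _
  -- Here `σᵢ = 0`, and every `l` with `σₗ > 0` precedes `i`, so `ψᵢ ⊥ ψₗ = zₗ`.
  rw [le_antisymm (not_lt.1 hi) (T.singularValues_nonneg i)]
  refine T.inner_apply_eq_zero_of_forall_inner_leftSingularVector (fun l hl => ?_) _
  have hli : (l : ℕ) < i := by
    by_contra! hil
    exact hi (hl.trans_le (T.singularValues_antitone hil))
  have hψl : ψ ⟨l, hli.trans i.2⟩ = T.leftSingularVector l := hψs _ hl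
  rw [← hψl]
  exact hψ.2 (Fin.ne_of_lt hli)

end LinearMap

section CenteredOrthonormal

variable {X : Type*} {w : X → ℝ}

noncomputable def sqrtWeighted (w f : X → ℝ) : EuclideanSpace ℝ X :=
  WithLp.toLp 2 fun x => √(w x) * f x

lemma sqrtWeighted_div_sqrt (hw : ∀ x, 0 < w x) (φ : EuclideanSpace ℝ X) :
    sqrtWeighted w (fun x => φ x / √(w x)) = φ := by
  ext x
  simp [sqrtWeighted, mul_div_cancel₀ _ (Real.sqrt_pos.2 (hw x)).ne']

variable [Fintype X]

def IsCenteredOrthonormal (w : X → ℝ) {k : ℕ} (f : Fin k → X → ℝ) : Prop :=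
  (∀ i, ∑ x, w x * f i x = 0) ∧ ∀ i j, ∑ x, w x * f i x * f j x = if i = j then 1 else 0

lemma inner_sqrtWeighted (hw : ∀ x, 0 ≤ w x) (f g : X → ℝ) :
    ⟪sqrtWeighted w f, sqrtWeighted w g⟫ = ∑ x, w x * f x * g x := by
  simp only [sqrtWeighted, PiLp.inner_apply, RCLike.inner_apply, conj_trivial]
  exact sum_congr rfl fun x _ => by linear_combination (f x * g x) * Real.mul_self_sqrt (hw x)

lemma isCenteredOrthonormal_iff (hw : ∀ x, 0 ≤ w x) {k : ℕ} (f : Fin k → X → ℝ) :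
    IsCenteredOrthonormal w f ↔ Orthonormal ℝ (fun i => sqrtWeighted w (f i)) ∧
      ∀ i, sqrtWeighted w (f i) ∈ (ℝ ∙ sqrtWeighted w 1)ᗮ := by
  simp [IsCenteredOrthonormal, orthonormal_iff_ite, inner_sqrtWeighted hw,
    Submodule.mem_orthogonal_singleton_iff_inner_right, and_comm]

end CenteredOrthonormal

lemma finrank_sub_one_le_finrank_orthogonal_span_singleton {E : Type*} [NormedAddCommGroup E]
    [InnerProductSpace ℝ E] [FiniteDimensional ℝ E] (u : E) :
    finrank ℝ E - 1 ≤ finrank ℝ (ℝ ∙ u)ᗮ := by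
  have h := (ℝ ∙ u).finrank_add_finrank_orthogonal
  have h1 : finrank ℝ (ℝ ∙ u) ≤ 1 := by simpa using finrank_span_le_card (R := ℝ) ({u} : Set E)
  omega

section CanonicalDependenceMatrix

variable {X Y : Type*} {P : X → Y → ℝ} {PX : X → ℝ} {PY : Y → ℝ}

def IsCanonicalDependenceMatrix (P : X → Y → ℝ) (PX : X → ℝ) (PY : Y → ℝ) (B : Matrix Y X ℝ) :
    Prop :=
  ∀ x y, B y x = (P x y - PX x * PY y) / (√(PX x) * √(PY y))

variable [Fintype X] [Fintype Y]

lemma sum_sum_mul_sum_sq_sub_eq (hPXdef : ∀ x, PX x = ∑ y, P x y)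
    (hPYdef : ∀ y, PY y = ∑ x, P x y) {k : ℕ} (f : Fin k → X → ℝ) (g : Fin k → Y → ℝ)
    (hf : ∀ i, ∑ x, PX x * f i x * f i x = 1) (hg : ∀ i, ∑ y, PY y * g i y * g i y = 1) :
    ∑ x, ∑ y, P x y * ∑ i, (f i x - g i y) ^ 2 =
      2 * k - 2 * ∑ i, ∑ x, ∑ y, P x y * f i x * g i y := by
  have hf' : ∀ i, ∑ x, ∑ y, P x y * f i x ^ 2 = 1 := fun i => by
    simp only [← sum_mul, ← hPXdef, ← hf i, sq, mul_assoc]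
  have hg' : ∀ i, ∑ x, ∑ y, P x y * g i y ^ 2 = 1 := fun i => by
    rw [sum_comm]
    simp only [← sum_mul, ← hPYdef, ← hg i, sq, mul_assoc]
  calc ∑ x, ∑ y, P x y * ∑ i, (f i x - g i y) ^ 2
      = ∑ x, ∑ y, ∑ i, (P x y * f i x ^ 2 + P x y * g i y ^ 2 - 2 * (P x y * f i x * g i y)) :=
        sum_congr rfl fun x _ => sum_congr rfl fun y _ => by
          rw [mul_sum]
          exact sum_congr rfl fun i _ => by ring
    _ = ∑ i, ∑ x, ∑ y, (P x y * f i x ^ 2 + P x y * g i y ^ 2 - 2 * (P x y * f i x * g i y)) :=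
        (sum_congr rfl fun x _ => sum_comm).trans sum_comm
    _ = 2 * k - 2 * ∑ i, ∑ x, ∑ y, P x y * f i x * g i y := by
        simp only [sum_sub_distrib, sum_add_distrib, ← mul_sum, hf', hg']
        simp
        ring

variable [DecidableEq X] {B : Matrix Y X ℝ}

lemma inner_sqrtWeighted_toEuclideanLin (hPX : ∀ x, 0 < PX x) (hPY : ∀ y, 0 < PY y)
    (hB : IsCanonicalDependenceMatrix P PX PY B) (f : X → ℝ) (g : Y → ℝ) :
    ⟪sqrtWeighted PY g, toEuclideanLin B (sqrtWeighted PX f)⟫ =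
      ∑ x, ∑ y, P x y * f x * g y - (∑ x, PX x * f x) * ∑ y, PY y * g y := by
  have hentry : ∀ x y, B y x * (√(PX x) * f x) * (√(PY y) * g y) =
      P x y * f x * g y - PX x * f x * (PY y * g y) := by
    intro x y
    rw [hB x y]
    field_simp [(Real.sqrt_pos.2 (hPX x)).ne', (Real.sqrt_pos.2 (hPY y)).ne']
  calc _ = ∑ y, ∑ x, (P x y * f x * g y - PX x * f x * (PY y * g y)) := by
        simp only [sqrtWeighted, PiLp.inner_apply, ofLp_toLpLin, RCLike.inner_apply, conj_trivial,
          toLin'_apply, mulVec, dotProduct, sum_mul, hentry]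
    _ = _ := by rw [sum_comm, sum_mul_sum, ← sum_sub_distrib]; simp only [sum_sub_distrib]

lemma toEuclideanLin_sqrtWeighted_one (hPX : ∀ x, 0 < PX x) (hPY : ∀ y, 0 < PY y)
    (hB : IsCanonicalDependenceMatrix P PX PY B)
    (hPYdef : ∀ y, PY y = ∑ x, P x y) (hPX1 : ∑ x, PX x = 1) :
    toEuclideanLin B (sqrtWeighted PX 1) = 0 := by
  refine ext_inner_left ℝ fun ψ => ?_
  rw [← sqrtWeighted_div_sqrt hPY ψ, inner_sqrtWeighted_toEuclideanLin hPX hPY hB,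
    inner_zero_right]
  simp only [Pi.one_apply, mul_one, hPX1, one_mul]
  rw [sum_comm]
  simp only [← sum_mul, ← hPYdef, sub_self]

lemma adjoint_toEuclideanLin_sqrtWeighted_one (hPX : ∀ x, 0 < PX x) (hPY : ∀ y, 0 < PY y)
    (hB : IsCanonicalDependenceMatrix P PX PY B)
    (hPXdef : ∀ x, PX x = ∑ y, P x y) (hPY1 : ∑ y, PY y = 1) :
    LinearMap.adjoint (toEuclideanLin B) (sqrtWeighted PY 1) = 0 := by
  refine ext_inner_right ℝ fun φ => ?_
  rw [LinearMap.adjoint_inner_left, ← sqrtWeighted_div_sqrt hPX φ,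
    inner_sqrtWeighted_toEuclideanLin hPX hPY hB, inner_zero_left]
  simp only [Pi.one_apply, mul_one, hPY1, ← sum_mul, ← hPXdef, sub_self]

lemma sum_sum_mul_eq_sum_inner (hPX : ∀ x, 0 < PX x) (hPY : ∀ y, 0 < PY y)
    (hB : IsCanonicalDependenceMatrix P PX PY B) {k : ℕ}
    {f : Fin k → X → ℝ} (g : Fin k → Y → ℝ) (hf : ∀ i, ∑ x, PX x * f i x = 0) :
    ∑ i, ∑ x, ∑ y, P x y * f i x * g i y =
      ∑ i, ⟪sqrtWeighted PY (g i), toEuclideanLin B (sqrtWeighted PX (f i))⟫ := by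
  simp [inner_sqrtWeighted_toEuclideanLin hPX hPY hB, hf]

theorem sum_sum_mul_le_sum_singularValue (hPX : ∀ x, 0 < PX x) (hPY : ∀ y, 0 < PY y)
    (hB : IsCanonicalDependenceMatrix P PX PY B) {k : ℕ}
    {f : Fin k → X → ℝ} {g : Fin k → Y → ℝ} (hf : IsCenteredOrthonormal PX f)
    (hg : IsCenteredOrthonormal PY g) :
    ∑ i, ∑ x, ∑ y, P x y * f i x * g i y ≤ ∑ i ∈ range k, singularValue B i := by
  rw [sum_sum_mul_eq_sum_inner hPX hPY hB g hf.1]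
  simp only [singularValue_eq_singularValues_toEuclideanLin]
  exact (toEuclideanLin B).sum_inner_apply_le_sum_singularValues
    ((isCenteredOrthonormal_iff (fun x => (hPX x).le) f).1 hf).1
    ((isCenteredOrthonormal_iff (fun y => (hPY y).le) g).1 hg).1

theorem exists_sum_sum_mul_eq_sum_singularValue (hPX : ∀ x, 0 < PX x) (hPY : ∀ y, 0 < PY y)
    (hB : IsCanonicalDependenceMatrix P PX PY B)
    (hPXdef : ∀ x, PX x = ∑ y, P x y) (hPYdef : ∀ y, PY y = ∑ x, P x y)
    (hPsum : ∑ x, ∑ y, P x y = 1) {k : ℕ} (hkX : k ≤ Fintype.card X - 1)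
    (hkY : k ≤ Fintype.card Y - 1) :
    ∃ (f : Fin k → X → ℝ) (g : Fin k → Y → ℝ), IsCenteredOrthonormal PX f ∧
      IsCenteredOrthonormal PY g ∧
      ∑ i, ∑ x, ∑ y, P x y * f i x * g i y = ∑ i ∈ range k, singularValue B i := by
  have hPX1 : ∑ x, PX x = 1 := by simp only [hPXdef]; exact hPsum
  have hPY1 : ∑ y, PY y = 1 := by simp only [hPYdef]; rw [sum_comm]; exact hPsum
  have hkU := finrank_sub_one_le_finrank_orthogonal_span_singleton (sqrtWeighted PX 1)
  have hkV := finrank_sub_one_le_finrank_orthogonal_span_singleton (sqrtWeighted PY 1)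
  rw [finrank_euclideanSpace] at hkU hkV
  obtain ⟨φ, ψ, hφ, hψ, hφU, hψV, hval⟩ :=
    (toEuclideanLin B).exists_orthonormal_sum_inner_apply_eq_sum_singularValues
      ((Submodule.span_singleton_le_iff_mem _ _).2
        (toEuclideanLin_sqrtWeighted_one hPX hPY hB hPYdef hPX1))
      ((Submodule.span_singleton_le_iff_mem _ _).2
        (adjoint_toEuclideanLin_sqrtWeighted_one hPX hPY hB hPXdef hPY1))
      (hkX.trans hkU) (hkY.trans hkV)
  let f : Fin k → X → ℝ := fun i x => φ i x / √(PX x)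
  let g : Fin k → Y → ℝ := fun i y => ψ i y / √(PY y)
  have hfφ : ∀ i, sqrtWeighted PX (f i) = φ i := fun i => sqrtWeighted_div_sqrt hPX _
  have hgψ : ∀ i, sqrtWeighted PY (g i) = ψ i := fun i => sqrtWeighted_div_sqrt hPY _
  have hf : IsCenteredOrthonormal PX f := by
    simpa only [isCenteredOrthonormal_iff (fun x => (hPX x).le), hfφ] using ⟨hφ, hφU⟩
  have hg : IsCenteredOrthonormal PY g := by
    simpa only [isCenteredOrthonormal_iff (fun y => (hPY y).le), hgψ] using ⟨hψ, hψV⟩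
  refine ⟨f, g, hf, hg, ?_⟩
  simp only [sum_sum_mul_eq_sum_inner hPX hPY hB g hf.1, hfφ, hgψ, hval,
    singularValue_eq_singularValues_toEuclideanLin]

end CanonicalDependenceMatrix

theorem stmt_2_general {X Y : Type*} [Fintype X] [Fintype Y] [DecidableEq X]
    (P : X → Y → ℝ) (hPsum : ∑ x, ∑ y, P x y = 1)
    (PX : X → ℝ) (hPXdef : ∀ x, PX x = ∑ y, P x y)
    (PY : Y → ℝ) (hPYdef : ∀ y, PY y = ∑ x, P x y)
    (hPXpos : ∀ x, 0 < PX x) (hPYpos : ∀ y, 0 < PY y)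
    (B : Matrix Y X ℝ)
    (hB : ∀ x y, B y x = (P x y - PX x * PY y) / (Real.sqrt (PX x) * Real.sqrt (PY y)))
    (k : ℕ) (hkK : k ≤ min (Fintype.card X) (Fintype.card Y) - 1)
    (Feas : (Fin k → X → ℝ) → (Fin k → Y → ℝ) → Prop)
    (hFeas : ∀ f g, Feas f g ↔
      ((∀ i, ∑ x, PX x * f i x = 0) ∧ (∀ i, ∑ y, PY y * g i y = 0) ∧
       (∀ i j, ∑ x, PX x * f i x * f j x = if i = j then 1 else 0) ∧
       (∀ i j, ∑ y, PY y * g i y * g j y = if i = j then 1 else 0))) :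
    (∃ f g, Feas f g ∧
        ∑ i : Fin k, ∑ x, ∑ y, P x y * f i x * g i y
          = ∑ i ∈ Finset.range k, singularValue B i) ∧
    (∀ f g, Feas f g →
        ∑ i : Fin k, ∑ x, ∑ y, P x y * f i x * g i y
          ≤ ∑ i ∈ Finset.range k, singularValue B i) ∧
    (∃ f g, Feas f g ∧
        ∑ x, ∑ y, P x y * (∑ i : Fin k, (f i x - g i y) ^ 2)
          = 2 * (k : ℝ) - 2 * ∑ i ∈ Finset.range k, singularValue B i) ∧
    (∀ f g, Feas f g →
        2 * (k : ℝ) - 2 * ∑ i ∈ Finset.range k, singularValue B i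
          ≤ ∑ x, ∑ y, P x y * (∑ i : Fin k, (f i x - g i y) ^ 2)) := by
  have hfeas : ∀ f g, Feas f g ↔ IsCenteredOrthonormal PX f ∧ IsCenteredOrthonormal PY g := by
    intro f g
    rw [hFeas, IsCenteredOrthonormal, IsCenteredOrthonormal]
    tauto
  have hUB : ∀ f g, Feas f g → ∑ i : Fin k, ∑ x, ∑ y, P x y * f i x * g i y ≤
      ∑ i ∈ range k, singularValue B i := fun f g h =>
    sum_sum_mul_le_sum_singularValue hPXpos hPYpos hB ((hfeas f g).1 h).1 ((hfeas f g).1 h).2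
  have hdist : ∀ f g, Feas f g → ∑ x, ∑ y, P x y * ∑ i : Fin k, (f i x - g i y) ^ 2 =
      2 * k - 2 * ∑ i : Fin k, ∑ x, ∑ y, P x y * f i x * g i y := fun f g h =>
    sum_sum_mul_sum_sq_sub_eq hPXdef hPYdef f g (fun i => by simpa using ((hfeas f g).1 h).1.2 i i)
      (fun i => by simpa using ((hfeas f g).1 h).2.2 i i)
  obtain ⟨f, g, hf, hg, hval⟩ := exists_sum_sum_mul_eq_sum_singularValue hPXpos hPYpos hB hPXdef
    hPYdef hPsum (k := k) (by omega) (by omega)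
  have h : Feas f g := (hfeas f g).2 ⟨hf, hg⟩
  refine ⟨⟨f, g, h, hval⟩, hUB, ⟨f, g, h, by rw [hdist f g h, hval]⟩, fun f g h => ?_⟩
  rw [hdist f g h]
  linarith [hUB f g h]

theorem stmt_2 {X Y : Type*} [Fintype X] [Fintype Y] [DecidableEq X] [DecidableEq Y]
    (P : X → Y → ℝ) (hP : ∀ x y, 0 ≤ P x y) (hPsum : ∑ x, ∑ y, P x y = 1)
    (PX : X → ℝ) (hPXdef : ∀ x, PX x = ∑ y, P x y)
    (PY : Y → ℝ) (hPYdef : ∀ y, PY y = ∑ x, P x y)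
    (hPXpos : ∀ x, 0 < PX x) (hPYpos : ∀ y, 0 < PY y)
    (B : Matrix Y X ℝ)
    (hB : ∀ x y, B y x = (P x y - PX x * PY y) / (Real.sqrt (PX x) * Real.sqrt (PY y)))
    (k : ℕ) (hk1 : 1 ≤ k) (hkK : k ≤ min (Fintype.card X) (Fintype.card Y) - 1)
    (Feas : (Fin k → X → ℝ) → (Fin k → Y → ℝ) → Prop)
    (hFeas : ∀ f g, Feas f g ↔
      ((∀ i, ∑ x, PX x * f i x = 0) ∧ (∀ i, ∑ y, PY y * g i y = 0) ∧
       (∀ i j, ∑ x, PX x * f i x * f j x = if i = j then 1 else 0) ∧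
       (∀ i j, ∑ y, PY y * g i y * g j y = if i = j then 1 else 0))) :
    (∃ f g, Feas f g ∧
        ∑ i : Fin k, ∑ x, ∑ y, P x y * f i x * g i y
          = ∑ i ∈ Finset.range k, singularValue B i) ∧
    (∀ f g, Feas f g →
        ∑ i : Fin k, ∑ x, ∑ y, P x y * f i x * g i y
          ≤ ∑ i ∈ Finset.range k, singularValue B i) ∧
    (∃ f g, Feas f g ∧
        ∑ x, ∑ y, P x y * (∑ i : Fin k, (f i x - g i y) ^ 2)
          = 2 * (k : ℝ) - 2 * ∑ i ∈ Finset.range k, singularValue B i) ∧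
    (∀ f g, Feas f g →
        2 * (k : ℝ) - 2 * ∑ i ∈ Finset.range k, singularValue B i
          ≤ ∑ x, ∑ y, P x y * (∑ i : Fin k, (f i x - g i y) ^ 2)) :=
  stmt_2_general P hPsum PX hPXdef PY hPYdef hPXpos hPYpos B hB k hkK Feas hFeas
end

section
/- Let 𝒳 and 𝒴 be finite alphabets. A matrix M ∈ ℝ^{|𝒴|×|𝒳|} is the divergence transfer matrix of some strictly positive joint pmf on 𝒳×𝒴 — i.e., there exists a pmf P_{X,Y} with P_{X,Y}(x,y) > 0 for all x,y such that M(y,x) = P_{X,Y}(x,y)/√(P_X(x)P_Y(y)) — if and only if every entry of M is strictly positive and the spectral norm of M equals 1. -/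
open Matrix

/-- The spectral (operator) norm of a real matrix: its largest singular value. -/
noncomputable def matrixSpectralNorm {m n : Type*} [Fintype m] [Fintype n] [DecidableEq n]
    (A : Matrix m n ℝ) : ℝ :=
  singularValue A 0

/-!
Put `B = Mᵀ M`, so that `‖M‖₂ = 1` says that `1 - B` is positive semidefinite and `B` has a
fixed vector `w ≠ 0`.

If `M` comes from `P`, then `M` maps `(√P_X(x))ₓ` to `(√P_Y(y))_y` and `Mᵀ` maps it back, so this
vector is fixed by `B`, and Cauchy–Schwarz (in Sedrakyan's form) shows `‖M z‖ ≤ ‖z‖`.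

Conversely, if `M > 0` entrywise, `|w|` maximises the Rayleigh quotient of `B` as well as `w`,
hence lies in the kernel of `1 - B`; a fixed vector of an entrywise positive matrix that is
nonnegative and nonzero is strictly positive. With `a = |w|` and `v = M a`, the joint pmf
`P(x, y) ∝ a(x) M(y, x) v(y)` has marginals proportional to `a²` and `v²`, so its divergence
transfer matrix is `M`.
-/

theorem ithLargest_zero_eq_iff {ι : Type*} [Fintype ι] [Nonempty ι] (f : ι → ℝ) (a : ℝ) :
    ithLargest f 0 = a ↔ (∀ i, f i ≤ a) ∧ ∃ i, f i = a := by
  set L := (Finset.univ.val.map f).sort (· ≤ ·)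
  have hmem : ∀ b, b ∈ L ↔ ∃ i, f i = b := by simp [L]
  have hL : L ≠ [] := List.ne_nil_of_mem ((hmem _).2 ⟨Classical.arbitrary ι, rfl⟩)
  have htop : ithLargest f 0 = L.getLast hL := by
    rw [ithLargest, List.getD_eq_getElem?_getD, ← List.head?_eq_getElem?, List.head?_reverse,
      List.getLast?_eq_some_getLast hL, Option.getD_some]
  have hsorted : L.Pairwise (· ≤ ·) := Multiset.pairwise_sort _ _
  rw [htop]
  constructor
  · rintro rfl
    exact ⟨fun i => hsorted.rel_getLast ((hmem _).2 ⟨i, rfl⟩), (hmem _).1 (L.getLast_mem hL)⟩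
  · rintro ⟨hle, i, rfl⟩
    obtain ⟨j, hj⟩ := (hmem _).1 (L.getLast_mem hL)
    exact le_antisymm (hj ▸ hle j) (hsorted.rel_getLast ((hmem _).2 ⟨i, rfl⟩))

namespace Matrix

namespace IsHermitian

variable {n : Type*} [Fintype n] [DecidableEq n] {B : Matrix n n ℝ} (hB : B.IsHermitian)
include hB

theorem posSemidef_smul_one_sub_iff (μ : ℝ) :
    (μ • 1 - B).PosSemidef ↔ ∀ i, hB.eigenvalues i ≤ μ := by
  have hsymm : (algebraMap ℝ (Matrix n n ℝ) μ - B).IsHermitian :=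
    (IsSelfAdjoint.algebraMap _ (.all μ)).sub hB
  rw [posSemidef_iff_isHermitian_and_spectrum_nonneg, ← Algebra.algebraMap_eq_smul_one,
    ← spectrum.singleton_sub_eq, hB.spectrum_real_eq_range_eigenvalues, and_iff_right hsymm]
  simp [Set.subset_def]

theorem exists_eigenvalues_eq_iff (t : ℝ) :
    (∃ i, hB.eigenvalues i = t) ↔ ∃ x ≠ 0, B *ᵥ x = t • x := by
  rw [← Set.mem_range, ← hB.spectrum_real_eq_range_eigenvalues, spectrum.mem_iff,
    isUnit_iff_isUnit_det, isUnit_iff_ne_zero, not_not, ← exists_mulVec_eq_zero_iff]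
  simp [sub_mulVec, Algebra.algebraMap_eq_smul_one, smul_mulVec, sub_eq_zero, eq_comm]

end IsHermitian

theorem posSemidef_one_sub_transpose_mul_self_iff {m n : Type*} [Fintype m] [Fintype n]
    [DecidableEq n] (A : Matrix m n ℝ) :
    (1 - Aᵀ * A).PosSemidef ↔ ∀ z, A *ᵥ z ⬝ᵥ A *ᵥ z ≤ z ⬝ᵥ z := by
  have hsymm : (1 - Aᵀ * A).IsHermitian := by
    simpa [conjTranspose_eq_transpose_of_trivial] using
      isHermitian_one.sub (isHermitian_conjTranspose_mul_self A)
  rw [posSemidef_iff_dotProduct_mulVec, and_iff_right hsymm]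
  simp [sub_mulVec, dotProduct_sub, ← mulVec_mulVec,
    dotProduct_mulVec _ Aᵀ, vecMul_transpose]

section Perron

variable {n : Type*} [Fintype n] {B : Matrix n n ℝ}

theorem dotProduct_mulVec_le_abs (hB : ∀ i j, 0 ≤ B i j) (w : n → ℝ) :
    w ⬝ᵥ B *ᵥ w ≤ |w| ⬝ᵥ B *ᵥ |w| := by
  simp only [dotProduct, mulVec, Finset.mul_sum, Pi.abs_apply]
  refine Finset.sum_le_sum fun i _ => Finset.sum_le_sum fun j _ => ?_
  calc w i * (B i j * w j) ≤ |w i * (B i j * w j)| := le_abs_self _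
    _ = |w i| * (B i j * |w j|) := by rw [abs_mul, abs_mul, abs_of_nonneg (hB i j)]

theorem pos_of_mulVec_eq_self (hB : ∀ i j, 0 < B i j) {a : n → ℝ} (ha : 0 ≤ a) (ha0 : a ≠ 0)
    (hfix : B *ᵥ a = a) (i : n) : 0 < a i := by
  obtain ⟨j, hj⟩ := Function.ne_iff.1 ha0
  calc 0 < B i j * a j := mul_pos (hB i j) ((ha j).lt_of_ne' hj)
    _ ≤ ∑ k, B i k * a k :=
      Finset.single_le_sum (fun k _ => mul_nonneg (hB i k).le (ha k)) (Finset.mem_univ j)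
    _ = a i := congrFun hfix i

theorem exists_pos_mulVec_eq_self [DecidableEq n] (hB : ∀ i j, 0 < B i j)
    (hC : (1 - B).PosSemidef) {w : n → ℝ} (hw0 : w ≠ 0) (hw : B *ᵥ w = w) :
    ∃ a : n → ℝ, (∀ i, 0 < a i) ∧ B *ᵥ a = a := by
  have hquad : ∀ x, x ⬝ᵥ (1 - B) *ᵥ x = x ⬝ᵥ x - x ⬝ᵥ B *ᵥ x := by
    simp [sub_mulVec, dotProduct_sub]
  have habs : |w| ⬝ᵥ |w| = w ⬝ᵥ w := by simp [dotProduct, abs_mul_abs_self]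
  have hzero : |w| ⬝ᵥ (1 - B) *ᵥ |w| = 0 := by
    refine le_antisymm ?_ (by simpa using hC.dotProduct_mulVec_nonneg |w|)
    rw [hquad, habs]
    linarith [dotProduct_mulVec_le_abs (fun i j => (hB i j).le) w, congrArg (w ⬝ᵥ ·) hw]
  have hfix : B *ᵥ |w| = |w| := by
    have := (hC.dotProduct_mulVec_zero_iff |w|).1 (by simpa using hzero)
    rwa [sub_mulVec, one_mulVec, sub_eq_zero, eq_comm] at this
  exact ⟨|w|, pos_of_mulVec_eq_self hB (abs_nonneg w) (by simpa using hw0) hfix, hfix⟩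

end Perron

end Matrix

theorem matrixSpectralNorm_eq_one_iff {m n : Type*} [Fintype m] [Fintype n] [DecidableEq n]
    [Nonempty n] (A : Matrix m n ℝ) :
    matrixSpectralNorm A = 1 ↔ (1 - Aᵀ * A).PosSemidef ∧ ∃ x ≠ 0, (Aᵀ * A) *ᵥ x = x := by
  have hB := isHermitian_conjTranspose_mul_self A
  rw [matrixSpectralNorm, singularValue, Real.sqrt_eq_one, ithLargest_zero_eq_iff,
    ← hB.posSemidef_smul_one_sub_iff, hB.exists_eigenvalues_eq_iff,
    conjTranspose_eq_transpose_of_trivial]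
  simp only [one_smul]

section JointDistribution

variable {X Y : Type*} [Fintype X] [Fintype Y] {P : X → Y → ℝ} {M : Matrix Y X ℝ}

theorem mulVec_sqrt_rowSum_eq [Nonempty Y] (hP : ∀ x y, 0 < P x y)
    (hM : ∀ x y, M y x = P x y / √((∑ y', P x y') * ∑ x', P x' y)) :
    M *ᵥ (fun x => √(∑ y, P x y)) = fun y => √(∑ x, P x y) := by
  ext y
  have hrow : ∀ x, √(∑ y', P x y') ≠ 0 := fun x =>
    (Real.sqrt_pos.2 (Finset.sum_pos (fun y' _ => hP x y') Finset.univ_nonempty)).ne'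
  calc ∑ x, M y x * √(∑ y', P x y') = ∑ x, P x y / √(∑ x', P x' y) := by
        refine Finset.sum_congr rfl fun x _ => ?_
        rw [hM, Real.sqrt_mul (Finset.sum_nonneg fun y' _ => (hP x y').le)]
        field_simp [hrow x]
    _ = √(∑ x, P x y) := by rw [← Finset.sum_div, Real.div_sqrt]

theorem transpose_mulVec_sqrt_colSum_eq [Nonempty X] (hP : ∀ x y, 0 < P x y)
    (hM : ∀ x y, M y x = P x y / √((∑ y', P x y') * ∑ x', P x' y)) :
    Mᵀ *ᵥ (fun y => √(∑ x, P x y)) = fun x => √(∑ y, P x y) :=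
  mulVec_sqrt_rowSum_eq (P := fun y x => P x y) (fun y x => hP x y)
    fun y x => by rw [transpose_apply, hM, mul_comm]

theorem dotProduct_mulVec_self_le [Nonempty X] [Nonempty Y] (hP : ∀ x y, 0 < P x y)
    (hM : ∀ x y, M y x = P x y / √((∑ y', P x y') * ∑ x', P x' y)) (z : X → ℝ) :
    M *ᵥ z ⬝ᵥ M *ᵥ z ≤ z ⬝ᵥ z := by
  have hrow : ∀ x, 0 < ∑ y, P x y := fun x =>
    Finset.sum_pos (fun y _ => hP x y) Finset.univ_nonempty
  have hcol : ∀ y, 0 < ∑ x, P x y := fun y =>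
    Finset.sum_pos (fun x _ => hP x y) Finset.univ_nonempty
  have hentry : ∀ y, (M *ᵥ z) y ^ 2 =
      (∑ x, P x y * (z x / √(∑ y', P x y'))) ^ 2 / ∑ x, P x y := by
    intro y
    simp only [mulVec, dotProduct, hM, Real.sqrt_mul (hrow _).le]
    conv_rhs => rw [← Real.sq_sqrt (hcol y).le, ← div_pow, Finset.sum_div]
    congr 2 with x
    field_simp [(Real.sqrt_pos.2 (hrow x)).ne', (Real.sqrt_pos.2 (hcol y)).ne']
  calc M *ᵥ z ⬝ᵥ M *ᵥ z = ∑ y, (M *ᵥ z) y ^ 2 := by simp [dotProduct, sq]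
    _ ≤ ∑ y, ∑ x, (P x y * (z x / √(∑ y', P x y'))) ^ 2 / P x y :=
        Finset.sum_le_sum fun y _ =>
          hentry y ▸ Finset.sq_sum_div_le_sum_sq_div _ _ fun x _ => hP x y
    _ = ∑ x, (z x / √(∑ y', P x y')) ^ 2 * ∑ y, P x y := by
        rw [Finset.sum_comm]
        refine Finset.sum_congr rfl fun x _ => ?_
        rw [Finset.mul_sum]
        refine Finset.sum_congr rfl fun y _ => ?_
        field_simp [(hP x y).ne']
    _ = z ⬝ᵥ z := by
        simp only [dotProduct]
        refine Finset.sum_congr rfl fun x _ => ?_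
        rw [div_pow, Real.sq_sqrt (hrow x).le]
        field_simp [(hrow x).ne']

theorem transpose_mul_mulVec_sqrt_rowSum_eq [Nonempty X] [Nonempty Y] (hP : ∀ x y, 0 < P x y)
    (hM : ∀ x y, M y x = P x y / √((∑ y', P x y') * ∑ x', P x' y)) :
    (Mᵀ * M) *ᵥ (fun x => √(∑ y, P x y)) = fun x => √(∑ y, P x y) := by
  rw [← mulVec_mulVec, mulVec_sqrt_rowSum_eq hP hM, transpose_mulVec_sqrt_colSum_eq hP hM]

theorem exists_joint_of_transpose_mul_mulVec_eq_self [Nonempty X] (hM : ∀ y x, 0 < M y x)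
    {a : X → ℝ} (ha : ∀ x, 0 < a x) (hfix : (Mᵀ * M) *ᵥ a = a) :
    ∃ P : X → Y → ℝ, (∀ x y, 0 < P x y) ∧ (∑ x, ∑ y, P x y = 1) ∧
      ∀ x y, M y x = P x y / √((∑ y', P x y') * (∑ x', P x' y)) := by
  set v := M *ᵥ a
  set c := a ⬝ᵥ a
  have hv : ∀ y, 0 < v y := fun y =>
    Finset.sum_pos (fun x _ => mul_pos (hM y x) (ha x)) Finset.univ_nonempty
  have hc : 0 < c := Finset.sum_pos (fun x _ => mul_pos (ha x) (ha x)) Finset.univ_nonempty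
  have hMv : ∀ x, ∑ y, M y x * v y = a x := fun x => by
    rw [← congrFun hfix x, ← mulVec_mulVec]
    rfl
  have hrow : ∀ x, ∑ y, a x * M y x * v y / c = a x ^ 2 / c := fun x => by
    simp only [mul_assoc, ← Finset.mul_sum, ← Finset.sum_div, hMv, sq]
  have hcol : ∀ y, ∑ x, a x * M y x * v y / c = v y ^ 2 / c := fun y => by
    rw [← Finset.sum_div, ← Finset.sum_mul, sq]
    simp only [v, mulVec, dotProduct, mul_comm (a _)]
  refine ⟨fun x y => a x * M y x * v y / c,
    fun x y => div_pos (mul_pos (mul_pos (ha x) (hM y x)) (hv y)) hc, ?_, fun x y => ?_⟩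
  · simp only [hrow, ← Finset.sum_div, sq]
    exact div_self hc.ne'
  · have hsq : a x ^ 2 / c * (v y ^ 2 / c) = (a x * v y / c) ^ 2 := by ring
    rw [hrow, hcol, hsq, Real.sqrt_sq (div_pos (mul_pos (ha x) (hv y)) hc).le]
    field_simp [(ha x).ne', (hv y).ne']

end JointDistribution

theorem stmt_3_general {X Y : Type*} [Fintype X] [Fintype Y] [DecidableEq X]
    [Nonempty X] [Nonempty Y] (M : Matrix Y X ℝ) :
    (∃ P : X → Y → ℝ, (∀ x y, 0 < P x y) ∧ (∑ x, ∑ y, P x y = 1) ∧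
        ∀ x y, M y x = P x y / Real.sqrt ((∑ y', P x y') * (∑ x', P x' y)))
    ↔ ((∀ y x, 0 < M y x) ∧ matrixSpectralNorm M = 1) := by
  rw [matrixSpectralNorm_eq_one_iff]
  constructor
  · rintro ⟨P, hP, -, hM⟩
    have hrow : ∀ x, 0 < ∑ y, P x y := fun x =>
      Finset.sum_pos (fun y _ => hP x y) Finset.univ_nonempty
    have hcol : ∀ y, 0 < ∑ x, P x y := fun y =>
      Finset.sum_pos (fun x _ => hP x y) Finset.univ_nonempty
    refine ⟨fun y x => ?_, (posSemidef_one_sub_transpose_mul_self_iff M).2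
      (dotProduct_mulVec_self_le hP hM), _, fun h => ?_, transpose_mul_mulVec_sqrt_rowSum_eq hP hM⟩
    · rw [hM]
      exact div_pos (hP x y) (Real.sqrt_pos.2 (mul_pos (hrow x) (hcol y)))
    · exact (Real.sqrt_pos.2 (hrow _)).ne' (congrFun h (Classical.arbitrary X))
  · rintro ⟨hMpos, hC, w, hw0, hw⟩
    have hBpos : ∀ x x', 0 < (Mᵀ * M) x x' := fun x x' =>
      Finset.sum_pos (fun y _ => mul_pos (hMpos y x) (hMpos y x')) Finset.univ_nonempty
    obtain ⟨a, ha, hfix⟩ := exists_pos_mulVec_eq_self hBpos hC hw0 hw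
    exact exists_joint_of_transpose_mul_mulVec_eq_self hMpos ha hfix

theorem stmt_3 {X Y : Type*} [Fintype X] [Fintype Y] [DecidableEq X] [DecidableEq Y]
    [Nonempty X] [Nonempty Y] (M : Matrix Y X ℝ) :
    (∃ P : X → Y → ℝ, (∀ x y, 0 < P x y) ∧ (∑ x, ∑ y, P x y = 1) ∧
        ∀ x y, M y x = P x y / Real.sqrt ((∑ y', P x y') * (∑ x', P x' y)))
    ↔ ((∀ y x, 0 < M y x) ∧ matrixSpectralNorm M = 1) :=
  stmt_3_general M
end

section
/- Let 𝒳 and 𝒴 be finite alphabets. A matrix M ∈ ℝ^{|𝒴|×|𝒳|} is the divergence transfer matrix of some joint pmf P_{X,Y} on 𝒳×𝒴 with strictly positive marginals — i.e., M(y,x) = P_{X,Y}(x,y)/√(P_X(x)P_Y(y)) for some such P_{X,Y} — if and only if: all entries of M are nonnegative, ‖M‖₂ = 1, there exists an entrywise strictly positive vector ψ^X ∈ ℝ^{|𝒳|} with MᵀM ψ^X = ψ^X, and there exists an entrywise strictly positive vector ψ^Y ∈ ℝ^{|𝒴|} with MMᵀ ψ^Y = ψ^Y. -/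
open Matrix

/-!
If `P` has positive marginals, its divergence transfer matrix `B` maps `√P_X` to `√P_Y` and
`Bᵀ` maps `√P_Y` back to `√P_X`. Conversely, if `M ≥ 0` and positive vectors satisfy `M u = w`,
`Mᵀ w = u`, then `P x y = u x * M y x * w y / ‖u‖²` is a pmf with marginals `u² / ‖u‖²` and
`w² / ‖u‖²` whose transfer matrix is `M`; given the eigenvectors of the theorem one takes
`u = ψ^X`, `w = M ψ^X`, which is positive because `M Mᵀ ψ^Y = ψ^Y > 0` forbids zero rows.
For the norm, the same pair `(u, w)` makes `M` a contraction by the Schur test, while `u` is a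
fixed vector of `MᵀM`, so the largest eigenvalue of `MᵀM` is exactly `1`.
-/

lemma isGreatest_getD_zero_of_pairwise_ge {α : Type*} [Preorder α] {L : List α}
    (hL : L.Pairwise (· ≥ ·)) (hne : L ≠ []) (d : α) : IsGreatest {x | x ∈ L} (L.getD 0 d) := by
  obtain _ | ⟨a, t⟩ := L
  · exact absurd rfl hne
  · refine ⟨List.mem_cons_self, fun x hx => ?_⟩
    obtain rfl | hx := List.mem_cons.1 hx
    · exact le_rfl
    · exact List.rel_of_pairwise_cons hL hx

lemma ithLargest_zero_eq_of_isGreatest {ι : Type*} [Fintype ι] {f : ι → ℝ} {c : ℝ}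
    (h : IsGreatest (Set.range f) c) : ithLargest f 0 = c := by
  set L := ((Finset.univ.val.map f).sort (· ≤ ·)).reverse
  have hmem : {x | x ∈ L} = Set.range f := by ext; simp [L]
  have hL : L.Pairwise (· ≥ ·) := List.pairwise_reverse.2 (Multiset.pairwise_sort _ _)
  have hne : L ≠ [] := fun hnil => by simpa [← hmem, hnil] using h.1
  exact (isGreatest_getD_zero_of_pairwise_ge hL hne 0).unique (hmem ▸ h)

section Spectrum

variable {m n : Type*} [Fintype m] [Fintype n] [DecidableEq n]

lemma Matrix.IsHermitian.exists_eigenvalues_eq {𝕜 : Type*} [RCLike 𝕜] {A : Matrix n n 𝕜}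
    (hA : A.IsHermitian) {v : n → 𝕜} (hv : v ≠ 0) {μ : ℝ} (h : A *ᵥ v = (μ : 𝕜) • v) :
    ∃ i, hA.eigenvalues i = μ := by
  rw [← Set.mem_range, ← hA.spectrum_real_eq_range_eigenvalues, spectrum.mem_iff,
    isUnit_iff_isUnit_det, isUnit_iff_ne_zero, not_not, ← exists_mulVec_eq_zero_iff]
  refine ⟨v, hv, ?_⟩
  rw [sub_mulVec, h, Algebra.algebraMap_eq_smul_one, smul_mulVec, one_mulVec, sub_eq_zero,
    RCLike.real_smul_eq_coe_smul (K := 𝕜)]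

lemma eigenvalues_conjTranspose_mul_self_le (M : Matrix m n ℝ) {c : ℝ}
    (hM : ∀ v, (M *ᵥ v) ⬝ᵥ (M *ᵥ v) ≤ c * (v ⬝ᵥ v)) (i : n) :
    (isHermitian_conjTranspose_mul_self M).eigenvalues i ≤ c := by
  set hA := isHermitian_conjTranspose_mul_self M
  set e := ⇑(hA.eigenvectorBasis i)
  have he : e ⬝ᵥ e = 1 := by
    have h := real_inner_self_eq_norm_sq (hA.eigenvectorBasis i)
    rwa [EuclideanSpace.inner_eq_star_dotProduct, hA.eigenvectorBasis.orthonormal.1 i, one_pow,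
      star_trivial] at h
  calc hA.eigenvalues i = e ⬝ᵥ ((Mᴴ * M) *ᵥ e) := by
        rw [hA.mulVec_eigenvectorBasis, dotProduct_smul, he, smul_eq_mul, mul_one]
    _ = (M *ᵥ e) ⬝ᵥ (M *ᵥ e) := by
        rw [← mulVec_mulVec, dotProduct_mulVec, conjTranspose_eq_transpose_of_trivial,
          vecMul_transpose]
    _ ≤ c := by simpa [he] using hM e

lemma matrixSpectralNorm_eq_one_of_contraction {M : Matrix m n ℝ}
    (hM : ∀ v, (M *ᵥ v) ⬝ᵥ (M *ᵥ v) ≤ v ⬝ᵥ v) {ψ : n → ℝ} (hψ : ψ ≠ 0)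
    (h : (Mᵀ * M) *ᵥ ψ = ψ) : matrixSpectralNorm M = 1 := by
  obtain ⟨i, hi⟩ := (isHermitian_conjTranspose_mul_self M).exists_eigenvalues_eq hψ (μ := 1)
    (by rw [conjTranspose_eq_transpose_of_trivial, h]; simp)
  have hle := eigenvalues_conjTranspose_mul_self_le M (c := 1) (by simpa using hM)
  rw [matrixSpectralNorm, singularValue, ithLargest_zero_eq_of_isGreatest ⟨⟨i, hi⟩, ?_⟩,
    Real.sqrt_one]
  rintro _ ⟨j, rfl⟩
  exact hle j

end Spectrum

section NonnegativeMatrix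
variable {m n : Type*} [Fintype n]

lemma mulVec_pos_of_nonneg {M : Matrix m n ℝ} (hM : ∀ i j, 0 ≤ M i j) {u : n → ℝ}
    (hu : ∀ j, 0 < u j) {i : m} (hi : M i ≠ 0) : 0 < (M *ᵥ u) i := by
  obtain ⟨j, hj⟩ := Function.ne_iff.1 hi
  exact Finset.sum_pos' (fun j _ => mul_nonneg (hM i j) (hu j).le)
    ⟨j, Finset.mem_univ _, mul_pos ((hM i j).lt_of_ne' hj) (hu j)⟩

variable [Fintype m]

theorem dotProduct_mulVec_self_le_of_schur {M : Matrix m n ℝ} (hM : ∀ i j, 0 ≤ M i j)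
    {u : n → ℝ} {w : m → ℝ} (hu : ∀ j, 0 < u j) (hMu : M *ᵥ u ≤ w) (hMw : Mᵀ *ᵥ w ≤ u)
    (v : n → ℝ) : (M *ᵥ v) ⬝ᵥ (M *ᵥ v) ≤ v ⬝ᵥ v := by
  have hrow : ∀ i, (M *ᵥ v) i ^ 2 ≤ w i * ∑ j, M i j * v j ^ 2 / u j := by
    intro i
    have hg : ∀ j, 0 ≤ M i j * v j ^ 2 / u j := fun j =>
      div_nonneg (mul_nonneg (hM i j) (sq_nonneg _)) (hu j).le
    calc (M *ᵥ v) i ^ 2 = (∑ j, M i j * v j) ^ 2 := rfl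
      _ ≤ (∑ j, M i j * u j) * ∑ j, M i j * v j ^ 2 / u j := by
        refine Finset.sum_sq_le_sum_mul_sum_of_sq_le_mul _ (fun j _ => ?_) (fun j _ => ?_)
          (fun j _ => le_of_eq ?_)
        · exact mul_nonneg (hM i j) (hu j).le
        · exact hg j
        · field_simp [(hu j).ne']
      _ ≤ w i * ∑ j, M i j * v j ^ 2 / u j :=
        mul_le_mul_of_nonneg_right (hMu i) (Finset.sum_nonneg fun j _ => hg j)
  calc (M *ᵥ v) ⬝ᵥ (M *ᵥ v) = ∑ i, (M *ᵥ v) i ^ 2 := by simp [dotProduct, sq]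
    _ ≤ ∑ i, w i * ∑ j, M i j * v j ^ 2 / u j := Finset.sum_le_sum fun i _ => hrow i
    _ = ∑ j, v j ^ 2 / u j * (Mᵀ *ᵥ w) j := by
      simp only [Finset.mul_sum, mulVec, dotProduct, transpose_apply]
      rw [Finset.sum_comm]
      exact Finset.sum_congr rfl fun j _ => Finset.sum_congr rfl fun i _ => by ring
    _ ≤ ∑ j, v j ^ 2 / u j * u j := Finset.sum_le_sum fun j _ =>
      mul_le_mul_of_nonneg_left (hMw j) (div_nonneg (sq_nonneg _) (hu j).le)
    _ = v ⬝ᵥ v := by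
      simp only [dotProduct, div_mul_cancel₀ _ (hu _).ne', sq]

lemma matrixSpectralNorm_eq_one_of_mulVec_eq [DecidableEq n] [Nonempty n] {M : Matrix m n ℝ}
    (hM : ∀ i j, 0 ≤ M i j) {u : n → ℝ} {w : m → ℝ} (hu : ∀ j, 0 < u j) (hMu : M *ᵥ u = w)
    (hMw : Mᵀ *ᵥ w = u) : matrixSpectralNorm M = 1 :=
  matrixSpectralNorm_eq_one_of_contraction (dotProduct_mulVec_self_le_of_schur hM hu hMu.le hMw.le)
    (fun h => (hu (Classical.arbitrary n)).ne' (congrFun h _))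
    (by rw [← mulVec_mulVec, hMu, hMw])

end NonnegativeMatrix

section DivergenceTransferMatrix
variable {X Y : Type*} [Fintype X] [Fintype Y]

noncomputable def divergenceTransferMatrix (P : X → Y → ℝ) : Matrix Y X ℝ :=
  Matrix.of fun y x => P x y / Real.sqrt ((∑ y', P x y') * (∑ x', P x' y))

lemma divergenceTransferMatrix_transpose (P : X → Y → ℝ) :
    (divergenceTransferMatrix P)ᵀ = divergenceTransferMatrix fun y x => P x y := by
  ext x y
  simp [divergenceTransferMatrix, mul_comm]

lemma divergenceTransferMatrix_nonneg {P : X → Y → ℝ} (hP : ∀ x y, 0 ≤ P x y) (y : Y) (x : X) :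
    0 ≤ divergenceTransferMatrix P y x :=
  div_nonneg (hP x y) (Real.sqrt_nonneg _)

lemma divergenceTransferMatrix_mulVec_sqrt {P : X → Y → ℝ} (hP : ∀ x, 0 < ∑ y, P x y) :
    divergenceTransferMatrix P *ᵥ (fun x => √(∑ y, P x y)) = fun y => √(∑ x, P x y) := by
  ext y
  calc ∑ x, P x y / √((∑ y', P x y') * ∑ x', P x' y) * √(∑ y', P x y')
      = ∑ x, P x y / √(∑ x', P x' y) := Finset.sum_congr rfl fun x _ => by
        rw [Real.sqrt_mul (hP x).le]
        field_simp [(Real.sqrt_pos.2 (hP x)).ne']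
    _ = √(∑ x, P x y) := by rw [← Finset.sum_div, Real.div_sqrt]

theorem exists_divergenceTransferMatrix_eq [Nonempty X] {M : Matrix Y X ℝ}
    (hM : ∀ y x, 0 ≤ M y x) {u : X → ℝ} {w : Y → ℝ} (hu : ∀ x, 0 < u x) (hw : ∀ y, 0 < w y)
    (hMu : M *ᵥ u = w) (hMw : Mᵀ *ᵥ w = u) :
    ∃ P : X → Y → ℝ, (∀ x y, 0 ≤ P x y) ∧ (∑ x, ∑ y, P x y = 1) ∧
      (∀ x, 0 < ∑ y, P x y) ∧ (∀ y, 0 < ∑ x, P x y) ∧ divergenceTransferMatrix P = M := by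
  set S := ∑ x, u x ^ 2
  have hS : 0 < S := Finset.sum_pos (fun x _ => pow_pos (hu x) 2) Finset.univ_nonempty
  have hrow : ∀ x, ∑ y, u x * M y x * w y / S = u x ^ 2 / S := fun x => by
    have h : ∑ y, M y x * w y = u x := congrFun hMw x
    simp only [← Finset.sum_div, mul_assoc, ← Finset.mul_sum, h, sq]
  have hcol : ∀ y, ∑ x, u x * M y x * w y / S = w y ^ 2 / S := fun y => by
    have h : ∑ x, M y x * u x = w y := congrFun hMu y
    simp only [← Finset.sum_div, ← Finset.sum_mul, mul_comm (u _), h, sq]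
  refine ⟨fun x y => u x * M y x * w y / S, fun x y => ?_, ?_, fun x => ?_, fun y => ?_, ?_⟩
  · exact div_nonneg (mul_nonneg (mul_nonneg (hu x).le (hM y x)) (hw y).le) hS.le
  · simp only [hrow, ← Finset.sum_div]
    exact div_self hS.ne'
  · exact hrow x ▸ div_pos (pow_pos (hu x) 2) hS
  · exact hcol y ▸ div_pos (pow_pos (hw y) 2) hS
  · ext y x
    have hsqrt : √(u x ^ 2 / S * (w y ^ 2 / S)) = u x * w y / S := by
      rw [show u x ^ 2 / S * (w y ^ 2 / S) = (u x * w y / S) ^ 2 by ring,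
        Real.sqrt_sq (div_nonneg (mul_nonneg (hu x).le (hw y).le) hS.le)]
    simp only [divergenceTransferMatrix, of_apply, hrow, hcol, hsqrt]
    field_simp [(hu x).ne', (hw y).ne']

end DivergenceTransferMatrix

theorem stmt_4_general {X Y : Type*} [Fintype X] [Fintype Y] [DecidableEq X]
    [Nonempty X] (M : Matrix Y X ℝ) :
    (∃ P : X → Y → ℝ, (∀ x y, 0 ≤ P x y) ∧ (∑ x, ∑ y, P x y = 1) ∧
        (∀ x, 0 < ∑ y, P x y) ∧ (∀ y, 0 < ∑ x, P x y) ∧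
        ∀ x y, M y x = P x y / Real.sqrt ((∑ y', P x y') * (∑ x', P x' y)))
    ↔ ((∀ y x, 0 ≤ M y x) ∧ matrixSpectralNorm M = 1 ∧
       (∃ ψX : X → ℝ, (∀ x, 0 < ψX x) ∧ (Mᵀ * M).mulVec ψX = ψX) ∧
       (∃ ψY : Y → ℝ, (∀ y, 0 < ψY y) ∧ (M * Mᵀ).mulVec ψY = ψY)) := by
  constructor
  · rintro ⟨P, hP, -, hPX, hPY, hM⟩
    obtain rfl : M = divergenceTransferMatrix P := Matrix.ext fun y x => hM x y
    have hMu := divergenceTransferMatrix_mulVec_sqrt hPX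
    have hMw : (divergenceTransferMatrix P)ᵀ *ᵥ (fun y => √(∑ x, P x y)) =
        fun x => √(∑ y, P x y) := by
      rw [divergenceTransferMatrix_transpose]
      exact divergenceTransferMatrix_mulVec_sqrt hPY
    have hu : ∀ x, 0 < √(∑ y, P x y) := fun x => Real.sqrt_pos.2 (hPX x)
    refine ⟨divergenceTransferMatrix_nonneg hP,
      matrixSpectralNorm_eq_one_of_mulVec_eq (divergenceTransferMatrix_nonneg hP) hu hMu hMw,
      ⟨_, hu, by rw [← mulVec_mulVec, hMu, hMw]⟩,
      ⟨_, fun y => Real.sqrt_pos.2 (hPY y), by rw [← mulVec_mulVec, hMw, hMu]⟩⟩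
  · rintro ⟨hM, -, ⟨ψX, hψX, hX⟩, ⟨ψY, hψY, hY⟩⟩
    have hrow : ∀ y, M y ≠ 0 := fun y hy => (hψY y).ne' <| by
      rw [← congrFun hY y, ← mulVec_mulVec]
      simp [mulVec, hy]
    obtain ⟨P, hP, hP1, hPX, hPY, rfl⟩ := exists_divergenceTransferMatrix_eq hM hψX
      (fun y => mulVec_pos_of_nonneg hM hψX (hrow y)) rfl (by rw [mulVec_mulVec, hX])
    exact ⟨P, hP, hP1, hPX, hPY, fun x y => rfl⟩

theorem stmt_4 {X Y : Type*} [Fintype X] [Fintype Y] [DecidableEq X] [DecidableEq Y]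
    [Nonempty X] [Nonempty Y] (M : Matrix Y X ℝ) :
    (∃ P : X → Y → ℝ, (∀ x y, 0 ≤ P x y) ∧ (∑ x, ∑ y, P x y = 1) ∧
        (∀ x, 0 < ∑ y, P x y) ∧ (∀ y, 0 < ∑ x, P x y) ∧
        ∀ x y, M y x = P x y / Real.sqrt ((∑ y', P x y') * (∑ x', P x' y)))
    ↔ ((∀ y x, 0 ≤ M y x) ∧ matrixSpectralNorm M = 1 ∧
       (∃ ψX : X → ℝ, (∀ x, 0 < ψX x) ∧ (Mᵀ * M).mulVec ψX = ψX) ∧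
       (∃ ψY : Y → ℝ, (∀ y, 0 < ψY y) ∧ (M * Mᵀ).mulVec ψY = ψY)) :=
  stmt_4_general M
end

section
/- Let P_{X,Y} ∈ 𝒫^{𝒳×𝒴}. For each strictly positive pmf Q on 𝒳 define V(Q) := sup over all f: 𝒳 → ℝ with Σ_x Q(x) f(x)² > 0 of the ratio √(Σ_y P_Y(y)·(Σ_x P_{X|Y}(x|y) f(x))²) / √(Σ_x Q(x) f(x)²). Then V(Q) ≥ 1 for every strictly positive pmf Q on 𝒳, and V(Q) = 1 if and only if Q = P_X; in particular Q = P_X is the unique minimizer of V over strictly positive pmfs on 𝒳. -/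
open Finset Real

-- Jensen for squares: (∑ w f)^2 ≤ (∑ w) * (∑ w f²) for nonneg weights
lemma jensen_sq' {ι : Type*} [Fintype ι] (w f : ι → ℝ) (hw : ∀ i, 0 ≤ w i) :
    (∑ i, w i * f i) ^ 2 ≤ (∑ i, w i) * (∑ i, w i * f i ^ 2) := by
  have h := Finset.sum_mul_sq_le_sq_mul_sq Finset.univ
      (fun i => Real.sqrt (w i)) (fun i => Real.sqrt (w i) * f i)
  have e1 : ∀ i, Real.sqrt (w i) * (Real.sqrt (w i) * f i) = w i * f i := by
    intro i; rw [← mul_assoc, Real.mul_self_sqrt (hw i)]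
  have e2 : ∀ i, (Real.sqrt (w i) * f i) ^ 2 = w i * f i ^ 2 := by
    intro i; rw [mul_pow, Real.sq_sqrt (hw i)]
  simpa [e1, e2, Real.sq_sqrt, hw] using h

theorem stmt_6 {X Y : Type*} [Fintype X] [Fintype Y]
    (P : X → Y → ℝ) (hP : ∀ x y, 0 ≤ P x y) (hPsum : ∑ x, ∑ y, P x y = 1)
    (hPX : ∀ x, 0 < ∑ y, P x y) (hPY : ∀ y, 0 < ∑ x, P x y)
    (V : (X → ℝ) → ℝ)
    (hV : ∀ Q : X → ℝ, V Q = sSup {r : ℝ | ∃ f : X → ℝ, 0 < ∑ x, Q x * f x ^ 2 ∧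
        r = Real.sqrt (∑ y, (∑ x', P x' y) * (∑ x, (P x y / (∑ x', P x' y)) * f x) ^ 2) /
            Real.sqrt (∑ x, Q x * f x ^ 2)}) :
    (∀ Q : X → ℝ, (∀ x, 0 < Q x) → (∑ x, Q x = 1) → 1 ≤ V Q) ∧
    (∀ Q : X → ℝ, (∀ x, 0 < Q x) → (∑ x, Q x = 1) →
      (V Q = 1 ↔ Q = fun x => ∑ y, P x y)) := by
  classical
  set p : X → ℝ := fun x => ∑ y, P x y with hp_def
  have hp : ∀ x, 0 < p x := hPX
  have hs : ∀ y, (0:ℝ) < ∑ x', P x' y := hPY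
  have hsum_p : ∑ x, p x = 1 := hPsum
  have hsum_s : ∑ y, ∑ x', P x' y = 1 := by rw [Finset.sum_comm]; exact hPsum
  -- notation
  set N : (X → ℝ) → ℝ :=
    fun f => ∑ y, (∑ x', P x' y) * (∑ x, (P x y / (∑ x', P x' y)) * f x) ^ 2 with hN_def
  set Dd : (X → ℝ) → (X → ℝ) → ℝ := fun Q f => ∑ x, Q x * f x ^ 2 with hD_def
  set S : (X → ℝ) → Set ℝ :=
    fun Q => {r : ℝ | ∃ f : X → ℝ, 0 < Dd Q f ∧ r = Real.sqrt (N f) / Real.sqrt (Dd Q f)}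
    with hS_def
  have hV' : ∀ Q : X → ℝ, V Q = sSup (S Q) := hV
  -- 1 ∈ S Q for Q summing to 1
  have hNone : N (fun _ => 1) = 1 := by
    rw [hN_def]
    have : ∀ y, (∑ x, (P x y / (∑ x', P x' y)) * (1:ℝ)) = 1 := by
      intro y
      simp only [mul_one]
      rw [← Finset.sum_div, div_self (hs y).ne']
    simp only [this]
    simpa using hsum_s
  have h1mem : ∀ Q : X → ℝ, (∑ x, Q x = 1) → (1:ℝ) ∈ S Q := by
    intro Q hQ1
    refine ⟨fun _ => 1, ?_, ?_⟩
    · simp only [hD_def, one_pow, mul_one]; rw [hQ1]; norm_num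
    · simp only [hD_def, one_pow, mul_one]
      rw [hQ1, hNone]
      simp
  -- BddAbove
  have hbdd : ∀ Q : X → ℝ, (∀ x, 0 < Q x) → BddAbove (S Q) := by
    intro Q hQ
    set C : ℝ := ∑ y, (∑ x', P x' y) * (∑ x, (P x y / (∑ x', P x' y)) ^ 2 / Q x) with hC_def
    have hC0 : 0 ≤ C := by
      apply Finset.sum_nonneg; intro y _
      apply mul_nonneg (hs y).le
      apply Finset.sum_nonneg; intro x _
      exact div_nonneg (sq_nonneg _) (hQ x).le
    refine ⟨Real.sqrt C, ?_⟩
    rintro r ⟨f, hDpos, rfl⟩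
    have key : N f ≤ C * Dd Q f := by
      rw [hN_def, hC_def, hD_def, Finset.sum_mul]
      apply Finset.sum_le_sum
      intro y _
      rw [mul_assoc]
      apply mul_le_mul_of_nonneg_left _ (hs y).le
      have h := Finset.sum_mul_sq_le_sq_mul_sq Finset.univ
          (fun x => P x y / (∑ x', P x' y) / Real.sqrt (Q x))
          (fun x => Real.sqrt (Q x) * f x)
      have e1 : ∀ x, (P x y / (∑ x', P x' y) / Real.sqrt (Q x)) * (Real.sqrt (Q x) * f x)
          = (P x y / (∑ x', P x' y)) * f x := by
        intro x
        have hq : Real.sqrt (Q x) ≠ 0 := (Real.sqrt_pos.2 (hQ x)).ne'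
        have e : (P x y / (∑ x', P x' y) / Real.sqrt (Q x)) * (Real.sqrt (Q x) * f x)
            = (P x y / (∑ x', P x' y)) * f x * (Real.sqrt (Q x) / Real.sqrt (Q x)) := by ring
        rw [e, div_self hq, mul_one]
      have e2 : ∀ x, (P x y / (∑ x', P x' y) / Real.sqrt (Q x)) ^ 2
          = (P x y / (∑ x', P x' y)) ^ 2 / Q x := by
        intro x
        rw [div_pow, Real.sq_sqrt (hQ x).le]
      have e3 : ∀ x, (Real.sqrt (Q x) * f x) ^ 2 = Q x * f x ^ 2 := by
        intro x; rw [mul_pow, Real.sq_sqrt (hQ x).le]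
      simp only [e1, e2, e3] at h
      exact h
    rw [div_le_iff₀ (Real.sqrt_pos.2 hDpos)]
    calc Real.sqrt (N f) ≤ Real.sqrt (C * Dd Q f) := Real.sqrt_le_sqrt key
      _ = Real.sqrt C * Real.sqrt (Dd Q f) := Real.sqrt_mul hC0 _
  -- part 1
  have part1 : ∀ Q : X → ℝ, (∀ x, 0 < Q x) → (∑ x, Q x = 1) → 1 ≤ V Q := by
    intro Q hQ hQ1
    rw [hV']
    exact le_csSup (hbdd Q hQ) (h1mem Q hQ1)
  refine ⟨part1, ?_⟩
  intro Q hQ hQ1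
  constructor
  · -- V Q = 1 → Q = p
    intro hVQ
    by_contra hne
    have hex : ∃ x, Q x ≠ p x := by
      by_contra h
      push_neg at h
      exact hne (funext h)
    set c : ℝ := ∑ x, p x ^ 2 / Q x with hc_def
    have hc_eq : c = 1 + ∑ x, (p x - Q x) ^ 2 / Q x := by
      have : ∀ x, (p x - Q x) ^ 2 / Q x = p x ^ 2 / Q x - 2 * p x + Q x := by
        intro x
        have h0 : Q x ≠ 0 := (hQ x).ne'
        field_simp
        ring
      rw [hc_def]
      simp only [this]
      rw [Finset.sum_add_distrib, Finset.sum_sub_distrib, ← Finset.mul_sum, hsum_p, hQ1]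
      ring
    have ht_pos : 0 < ∑ x, (p x - Q x) ^ 2 / Q x := by
      obtain ⟨x0, hx0⟩ := hex
      apply Finset.sum_pos' (fun x _ => div_nonneg (sq_nonneg _) (hQ x).le)
      refine ⟨x0, Finset.mem_univ _, ?_⟩
      apply div_pos _ (hQ x0)
      exact pow_two_pos_of_ne_zero (sub_ne_zero.mpr (fun h => hx0 h.symm))
    have hc1 : 1 < c := by rw [hc_eq]; linarith
    have hc0 : 0 < c := by linarith
    -- the test function
    set f : X → ℝ := fun x => p x / Q x with hf_def
    have hDc : Dd Q f = c := by
      rw [hD_def, hc_def]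
      apply Finset.sum_congr rfl
      intro x _
      rw [hf_def]
      have h0 : Q x ≠ 0 := (hQ x).ne'
      field_simp
    have hDpos : 0 < Dd Q f := hDc ▸ hc0
    have hsg : ∑ y, (∑ x', P x' y) * (∑ x, (P x y / (∑ x', P x' y)) * f x) = c := by
      have e1 : ∀ y, (∑ x', P x' y) * (∑ x, (P x y / (∑ x', P x' y)) * f x)
          = ∑ x, P x y * f x := by
        intro y
        rw [Finset.mul_sum]
        apply Finset.sum_congr rfl
        intro x _
        rw [← mul_assoc, mul_div_cancel₀ _ (hs y).ne']
      simp only [e1]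
      rw [Finset.sum_comm, hc_def]
      apply Finset.sum_congr rfl
      intro x _
      rw [← Finset.sum_mul]
      show p x * f x = p x ^ 2 / Q x
      rw [hf_def]
      have h0 : Q x ≠ 0 := (hQ x).ne'
      field_simp
    have hNge : c ^ 2 ≤ N f := by
      have h := jensen_sq' (fun y => ∑ x', P x' y)
          (fun y => ∑ x, (P x y / (∑ x', P x' y)) * f x) (fun y => (hs y).le)
      rw [hsum_s, one_mul] at h
      calc c ^ 2 = (∑ y, (∑ x', P x' y) * (∑ x, (P x y / (∑ x', P x' y)) * f x)) ^ 2 := by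
            rw [hsg]
        _ ≤ N f := h
    have hrge : Real.sqrt c ≤ Real.sqrt (N f) / Real.sqrt (Dd Q f) := by
      rw [hDc]
      have h1 : c ≤ Real.sqrt (N f) := by
        calc c = Real.sqrt (c ^ 2) := by rw [Real.sqrt_sq hc0.le]
          _ ≤ Real.sqrt (N f) := Real.sqrt_le_sqrt hNge
      calc Real.sqrt c = c / Real.sqrt c := (Real.div_sqrt).symm
        _ ≤ Real.sqrt (N f) / Real.sqrt c :=
            (div_le_div_iff_of_pos_right (Real.sqrt_pos.2 hc0)).mpr h1
    have hmem : Real.sqrt (N f) / Real.sqrt (Dd Q f) ∈ S Q := ⟨f, hDpos, rfl⟩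
    have : Real.sqrt c ≤ V Q := by
      rw [hV']
      exact le_trans hrge (le_csSup (hbdd Q hQ) hmem)
    rw [hVQ] at this
    have hgt : 1 < Real.sqrt c := by
      have h := Real.sqrt_lt_sqrt (by norm_num : (0:ℝ) ≤ 1) hc1
      simpa using h
    linarith
  · -- Q = p → V Q = 1
    rintro rfl
    rw [hV']
    apply le_antisymm
    · apply csSup_le ⟨1, h1mem _ hPsum⟩
      rintro r ⟨f, hDpos, rfl⟩
      have key : N f ≤ Dd p f := by
        rw [hN_def, hD_def]
        have step : ∀ y, (∑ x', P x' y) * (∑ x, (P x y / (∑ x', P x' y)) * f x) ^ 2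
            ≤ ∑ x, P x y * f x ^ 2 := by
          intro y
          have h := jensen_sq' (fun x => P x y / (∑ x', P x' y)) f
              (fun x => div_nonneg (hP x y) (hs y).le)
          have hw1 : (∑ x, P x y / (∑ x', P x' y)) = 1 := by
            rw [← Finset.sum_div, div_self (hs y).ne']
          rw [hw1, one_mul] at h
          calc (∑ x', P x' y) * (∑ x, (P x y / (∑ x', P x' y)) * f x) ^ 2
              ≤ (∑ x', P x' y) * (∑ x, (P x y / (∑ x', P x' y)) * f x ^ 2) :=
                mul_le_mul_of_nonneg_left h (hs y).le
            _ = ∑ x, P x y * f x ^ 2 := by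
                rw [Finset.mul_sum]
                apply Finset.sum_congr rfl
                intro x _
                rw [← mul_assoc, mul_div_cancel₀ _ (hs y).ne']
        calc (∑ y, (∑ x', P x' y) * (∑ x, (P x y / (∑ x', P x' y)) * f x) ^ 2)
            ≤ ∑ y, ∑ x, P x y * f x ^ 2 := Finset.sum_le_sum fun y _ => step y
          _ = ∑ x, p x * f x ^ 2 := by
              rw [Finset.sum_comm]
              exact Finset.sum_congr rfl fun x _ => by rw [hp_def, Finset.sum_mul]
      rw [div_le_one (Real.sqrt_pos.2 hDpos)]
      exact Real.sqrt_le_sqrt key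
    · exact le_csSup (hbdd _ hp) (h1mem _ hPsum)
end

section
/- Let 𝒵 be a finite set and P₀ a strictly positive pmf on 𝒵. For every η > 0 there exists ε₀ > 0 such that for all 0 < ε < ε₀ and all pmfs P₁, P₂ on 𝒵 satisfying Σ_z (P_i(z) − P₀(z))²/P₀(z) ≤ ε² for i = 1,2, both P₁ and P₂ are strictly positive, the KL divergence D(P₁‖P₂) = Σ_z P₁(z)·log(P₁(z)/P₂(z)) is finite, and |D(P₁‖P₂) − (1/2)·Σ_z (P₁(z) − P₂(z))²/P₀(z)| ≤ η·ε². -/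
/-!
Pointwise, `p log (p / q) - p + q = q φ((p - q) / q)` with `φ(u) = (1 + u) log (1 + u) - u`, and
`φ(u) = u² / 2 + O(|u|³)`. A χ²-ball of radius `ε` around `P₀` forces `|P z - P₀ z| ≤ ε √(P₀ z)`,
so each term equals `(p - q)² / (2 P₀ z)` up to a relative error `O(ε / √(min P₀))`; the terms
`- p + q` cancel after summation because both measures have mass one, and
`∑ (P₁ - P₂)² / P₀ ≤ 4 ε²` turns the relative error into `O(ε³)`.
-/

open Finset Real

lemma abs_one_add_mul_log_one_add_sub_le {u : ℝ} (hu : |u| ≤ 1 / 2) :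
    |(1 + u) * log (1 + u) - u - u ^ 2 / 2| ≤ 4 * |u| ^ 3 := by
  have hlog : |log (1 + u) - u + u ^ 2 / 2| ≤ 2 * |u| ^ 3 := by
    have h := abs_log_sub_add_sum_range_le (x := -u) (by rw [abs_neg]; linarith) 2
    norm_num [sum_range_succ] at h
    calc |log (1 + u) - u + u ^ 2 / 2|
        = |-u + u ^ 2 / 2 + log (1 + u)| := by ring_nf
      _ ≤ |u| ^ 3 / (1 - |u|) := h
      _ ≤ 2 * |u| ^ 3 := by
        rw [div_le_iff₀ (by linarith)]; nlinarith [pow_nonneg (abs_nonneg u) 3]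
  have h1u : |1 + u| ≤ 3 / 2 := by rw [abs_le] at hu ⊢; constructor <;> linarith
  calc |(1 + u) * log (1 + u) - u - u ^ 2 / 2|
      = |(1 + u) * (log (1 + u) - u + u ^ 2 / 2) - u ^ 3 / 2| := by ring_nf
    _ ≤ |1 + u| * |log (1 + u) - u + u ^ 2 / 2| + |u| ^ 3 / 2 := by
      rw [← abs_mul, show |u| ^ 3 / 2 = |u ^ 3 / 2| by rw [abs_div, abs_pow]; norm_num]
      exact abs_sub _ _
    _ ≤ 3 / 2 * (2 * |u| ^ 3) + |u| ^ 3 / 2 := by gcongr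
    _ ≤ 4 * |u| ^ 3 := by nlinarith [pow_nonneg (abs_nonneg u) 3]

lemma abs_mul_log_div_sub_add_sub_sq_le {p q : ℝ} (hq : 0 < q) (hpq : 2 * |p - q| ≤ q) :
    |p * log (p / q) - p + q - (p - q) ^ 2 / (2 * q)| ≤ 4 * |p - q| ^ 3 / q ^ 2 := by
  have hu : |(p - q) / q| ≤ 1 / 2 := by
    rw [abs_div, abs_of_pos hq, div_le_iff₀ hq]; linarith
  have key := abs_one_add_mul_log_one_add_sub_le hu
  rw [show 1 + (p - q) / q = p / q by field_simp; ring] at key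
  calc |p * log (p / q) - p + q - (p - q) ^ 2 / (2 * q)|
      = q * |p / q * log (p / q) - (p - q) / q - ((p - q) / q) ^ 2 / 2| := by
        rw [← abs_of_pos hq, ← abs_mul, abs_of_pos hq]
        congr 1; field_simp; ring
    _ ≤ q * (4 * |(p - q) / q| ^ 3) := by gcongr
    _ = 4 * |p - q| ^ 3 / q ^ 2 := by
        rw [abs_div, abs_of_pos hq]; field_simp

lemma abs_mul_log_div_sub_add_sub_sq_le_of_abs_sub_le {p q r δ : ℝ} (hr : 0 < r) (hδ : 8 * δ ≤ r)
    (hp : |p - r| ≤ δ) (hq : |q - r| ≤ δ) :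
    |p * log (p / q) - p + q - (p - q) ^ 2 / (2 * r)| ≤ 33 * δ / r * ((p - q) ^ 2 / r) := by
  have hq2 : r / 2 ≤ q := by linarith [(abs_le.1 hq).1, abs_nonneg (q - r)]
  have hq0 : 0 < q := by linarith
  have hpq : |p - q| ≤ 2 * δ := by
    calc |p - q| ≤ |p - r| + |r - q| := abs_sub_le p r q
      _ ≤ 2 * δ := by rw [abs_sub_comm r q]; linarith
  have htaylor := abs_mul_log_div_sub_add_sub_sq_le hq0 (by linarith)
  have hcube : 4 * |p - q| ^ 3 / q ^ 2 ≤ 32 * δ / r * ((p - q) ^ 2 / r) := by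
    rw [show |p - q| ^ 3 = (p - q) ^ 2 * |p - q| by rw [pow_succ, sq_abs],
      div_le_iff₀ (by positivity)]
    calc 4 * ((p - q) ^ 2 * |p - q|) ≤ 4 * ((p - q) ^ 2 * (2 * δ)) := by gcongr
      _ = 32 * δ / r * ((p - q) ^ 2 / r) * (r / 2) ^ 2 := by field_simp; ring
      _ ≤ 32 * δ / r * ((p - q) ^ 2 / r) * q ^ 2 := by
        have : 0 ≤ δ := (abs_nonneg _).trans hp
        gcongr
  have hswap : |(p - q) ^ 2 / (2 * q) - (p - q) ^ 2 / (2 * r)| ≤ δ / r * ((p - q) ^ 2 / r) := by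
    rw [show (p - q) ^ 2 / (2 * q) - (p - q) ^ 2 / (2 * r)
        = (p - q) ^ 2 / r * ((r - q) / (2 * q)) by field_simp,
      abs_mul, abs_of_nonneg (by positivity), mul_comm]
    have hfactor : |(r - q) / (2 * q)| ≤ δ / r := by
      rw [abs_div, abs_of_pos (by positivity : (0 : ℝ) < 2 * q), abs_sub_comm,
        div_le_div_iff₀ (by positivity) hr]
      nlinarith [abs_nonneg (q - r)]
    gcongr
  calc |p * log (p / q) - p + q - (p - q) ^ 2 / (2 * r)|
      = |(p * log (p / q) - p + q - (p - q) ^ 2 / (2 * q)) +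
          ((p - q) ^ 2 / (2 * q) - (p - q) ^ 2 / (2 * r))| := by ring_nf
    _ ≤ 32 * δ / r * ((p - q) ^ 2 / r) + δ / r * ((p - q) ^ 2 / r) :=
      (abs_add_le _ _).trans (add_le_add (htaylor.trans hcube) hswap)
    _ = 33 * δ / r * ((p - q) ^ 2 / r) := by ring

lemma eight_mul_mul_sqrt_le {ε r : ℝ} (hr : 0 ≤ r) (hε : 8 * ε ≤ √r) : 8 * (ε * √r) ≤ r :=
  calc 8 * (ε * √r) = 8 * ε * √r := by ring
    _ ≤ √r * √r := by gcongr
    _ = r := mul_self_sqrt hr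

lemma pos_of_abs_sub_le_mul_sqrt {p r ε : ℝ} (hr : 0 < r) (hε : 8 * ε ≤ √r)
    (hp : |p - r| ≤ ε * √r) : 0 < p := by
  linarith [(abs_le.1 hp).1, eight_mul_mul_sqrt_le hr.le hε]

lemma abs_mul_log_div_sub_add_sub_sq_le_of_abs_sub_le_mul_sqrt {p q r ε : ℝ} (hr : 0 < r)
    (hε : 8 * ε ≤ √r) (hp : |p - r| ≤ ε * √r) (hq : |q - r| ≤ ε * √r) :
    |p * log (p / q) - p + q - (p - q) ^ 2 / (2 * r)| ≤ 33 * (ε / √r) * ((p - q) ^ 2 / r) := by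
  have h := abs_mul_log_div_sub_add_sub_sq_le_of_abs_sub_le hr
    (eight_mul_mul_sqrt_le hr.le hε) hp hq
  have hsqrt : 0 < √r := sqrt_pos.2 hr
  rwa [mul_div_assoc, show ε * √r / r = ε / √r by
    rw [div_eq_div_iff hr.ne' hsqrt.ne', mul_assoc, mul_self_sqrt hr.le]] at h

section FiniteSums

variable {Z : Type*} [Fintype Z]

lemma exists_pos_le_of_forall_pos {f : Z → ℝ} (hf : ∀ z, 0 < f z) : ∃ m > 0, ∀ z, m ≤ f z := by
  cases isEmpty_or_nonempty Z
  · exact ⟨1, one_pos, isEmptyElim⟩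
  · obtain ⟨z₀, hz₀⟩ := Finite.exists_min f
    exact ⟨f z₀, hf z₀, hz₀⟩

lemma abs_sub_le_mul_sqrt_of_sum_sq_div_le {P Q : Z → ℝ} {ε : ℝ} (hQ : ∀ z, 0 < Q z)
    (hε : 0 ≤ ε) (h : ∑ z, (P z - Q z) ^ 2 / Q z ≤ ε ^ 2) (z : Z) :
    |P z - Q z| ≤ ε * √(Q z) := by
  have hz : (P z - Q z) ^ 2 / Q z ≤ ε ^ 2 :=
    (single_le_sum (f := fun z => (P z - Q z) ^ 2 / Q z)
      (fun i _ => div_nonneg (sq_nonneg _) (hQ i).le) (mem_univ z)).trans h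
  rw [div_le_iff₀ (hQ z)] at hz
  calc |P z - Q z| ≤ √(ε ^ 2 * Q z) := abs_le_sqrt hz
    _ = ε * √(Q z) := by rw [sqrt_mul (sq_nonneg ε), sqrt_sq hε]

lemma sum_sq_sub_div_le {P Q R W : Z → ℝ} (hW : ∀ z, 0 ≤ W z) :
    ∑ z, (P z - Q z) ^ 2 / W z
      ≤ 2 * ∑ z, (P z - R z) ^ 2 / W z + 2 * ∑ z, (Q z - R z) ^ 2 / W z := by
  rw [mul_sum, mul_sum, ← sum_add_distrib]
  gcongr with z
  rw [← mul_div_assoc, ← mul_div_assoc, ← add_div]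
  gcongr
  · exact hW z
  · nlinarith [sq_nonneg (P z + Q z - 2 * R z)]

lemma sum_mul_log_div_sub_half_sum_sq_div_eq {P Q R : Z → ℝ} (h : ∑ z, P z = ∑ z, Q z) :
    ∑ z, P z * log (P z / Q z) - 1 / 2 * ∑ z, (P z - Q z) ^ 2 / R z
      = ∑ z, (P z * log (P z / Q z) - P z + Q z - (P z - Q z) ^ 2 / (2 * R z)) := by
  have hzero : ∑ z, (Q z - P z) = 0 := by rw [sum_sub_distrib, h, sub_self]
  rw [← add_zero (_ - _), ← hzero, mul_sum, ← sum_sub_distrib, ← sum_add_distrib]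
  refine sum_congr rfl fun z _ => ?_
  rw [mul_comm 2 (R z), ← div_div]
  ring

end FiniteSums

theorem stmt_7_general {Z : Type*} [Fintype Z]
    (P0 : Z → ℝ) (hpos : ∀ z, 0 < P0 z) :
    ∀ η > 0, ∃ ε₀ > 0, ∀ ε : ℝ, 0 < ε → ε < ε₀ →
      ∀ P1 P2 : Z → ℝ,
        (∀ z, 0 ≤ P1 z) → (∑ z, P1 z = 1) →
        (∀ z, 0 ≤ P2 z) → (∑ z, P2 z = 1) →
        (∑ z, (P1 z - P0 z) ^ 2 / P0 z ≤ ε ^ 2) →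
        (∑ z, (P2 z - P0 z) ^ 2 / P0 z ≤ ε ^ 2) →
        (∀ z, 0 < P1 z) ∧ (∀ z, 0 < P2 z) ∧
        |(∑ z, P1 z * Real.log (P1 z / P2 z)) -
            (1 / 2) * ∑ z, (P1 z - P2 z) ^ 2 / P0 z| ≤ η * ε ^ 2 := by
  intro η hη
  obtain ⟨m, hm, hmP0⟩ := exists_pos_le_of_forall_pos hpos
  have hsqrtm : 0 < √m := sqrt_pos.2 hm
  refine ⟨min (√m / 8) (η * √m / 132), by positivity, ?_⟩
  intro ε hε hεlt P1 P2 _ h1 _ h2 hχ1 hχ2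
  have hε8 : ∀ z, 8 * ε ≤ √(P0 z) := fun z => by
    linarith [min_le_left (√m / 8) (η * √m / 132), sqrt_le_sqrt (hmP0 z)]
  have hεη : 132 * ε ≤ η * √m := by linarith [min_le_right (√m / 8) (η * √m / 132)]
  have hdev1 := abs_sub_le_mul_sqrt_of_sum_sq_div_le hpos hε.le hχ1
  have hdev2 := abs_sub_le_mul_sqrt_of_sum_sq_div_le hpos hε.le hχ2
  refine ⟨fun z => pos_of_abs_sub_le_mul_sqrt (hpos z) (hε8 z) (hdev1 z),
    fun z => pos_of_abs_sub_le_mul_sqrt (hpos z) (hε8 z) (hdev2 z), ?_⟩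
  rw [sum_mul_log_div_sub_half_sum_sq_div_eq (h1.trans h2.symm)]
  calc |∑ z, (P1 z * log (P1 z / P2 z) - P1 z + P2 z - (P1 z - P2 z) ^ 2 / (2 * P0 z))|
      ≤ ∑ z, |P1 z * log (P1 z / P2 z) - P1 z + P2 z - (P1 z - P2 z) ^ 2 / (2 * P0 z)| :=
        abs_sum_le_sum_abs _ _
    _ ≤ ∑ z, 33 * (ε / √m) * ((P1 z - P2 z) ^ 2 / P0 z) := by
        gcongr with z
        refine (abs_mul_log_div_sub_add_sub_sq_le_of_abs_sub_le_mul_sqrt (hpos z) (hε8 z)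
          (hdev1 z) (hdev2 z)).trans ?_
        have := hpos z
        gcongr
        exact hmP0 z
    _ = 33 * (ε / √m) * ∑ z, (P1 z - P2 z) ^ 2 / P0 z := (mul_sum _ _ _).symm
    _ ≤ 33 * (ε / √m) * (4 * ε ^ 2) := by
        gcongr
        exact (sum_sq_sub_div_le (R := P0) fun z => (hpos z).le).trans (by linarith)
    _ ≤ η * ε ^ 2 := by
        rw [show 33 * (ε / √m) * (4 * ε ^ 2) = 132 * ε / √m * ε ^ 2 by ring]
        gcongr
        rwa [div_le_iff₀ hsqrtm]

theorem stmt_7 {Z : Type*} [Fintype Z]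
    (P0 : Z → ℝ) (hpos : ∀ z, 0 < P0 z) (hsum : ∑ z, P0 z = 1) :
    ∀ η > 0, ∃ ε₀ > 0, ∀ ε : ℝ, 0 < ε → ε < ε₀ →
      ∀ P1 P2 : Z → ℝ,
        (∀ z, 0 ≤ P1 z) → (∑ z, P1 z = 1) →
        (∀ z, 0 ≤ P2 z) → (∑ z, P2 z = 1) →
        (∑ z, (P1 z - P0 z) ^ 2 / P0 z ≤ ε ^ 2) →
        (∑ z, (P2 z - P0 z) ^ 2 / P0 z ≤ ε ^ 2) →
        (∀ z, 0 < P1 z) ∧ (∀ z, 0 < P2 z) ∧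
        |(∑ z, P1 z * Real.log (P1 z / P2 z)) -
            (1 / 2) * ∑ z, (P1 z - P2 z) ^ 2 / P0 z| ≤ η * ε ^ 2 :=
  stmt_7_general P0 hpos
end

section
/- Let 𝒰, 𝒳, 𝒴, 𝒱 be finite sets and P a joint pmf on 𝒰×𝒳×𝒴×𝒱 with strictly positive marginals P_U, P_X, P_Y, P_V, such that U ↔ X ↔ Y ↔ V forms a Markov chain, i.e., P(u,x,y,v)·P_X(x)·P_Y(y) = P_{U,X}(u,x)·P_{X,Y}(x,y)·P_{Y,V}(y,v) for all u,x,y,v. Then for every u ∈ 𝒰 and v ∈ 𝒱: P_{U,V}(u,v) = P_U(u)·P_V(v)·[1 + Σ_{x,y} (P_{X|U}(x|u) − P_X(x)) · (P_{X,Y}(x,y)/(P_X(x)P_Y(y))) · (P_{Y|V}(y|v) − P_Y(y))], where P_{X|U}(x|u) = P_{U,X}(u,x)/P_U(u) and P_{Y|V}(y|v) = P_{Y,V}(y,v)/P_V(v). -/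
/-!
By the Markov property `P(u,x,y,v) = P_{UX}(u,x) P_{XY}(x,y) P_{YV}(y,v) / (P_X(x) P_Y(y))`, so
`P_{UV}(u,v) / (P_U(u) P_V(v))` is the bilinear form with kernel `K = P_{XY} / (P_X P_Y)` evaluated
at the conditionals `P_{X|U=u}` and `P_{Y|V=v}`. Since `K P_Y = 1` and `P_X K = 1`, centering both
arguments at the marginals lowers this bilinear form by exactly `1`.
-/

open Finset

theorem sum_sub_mul_mul_sub_eq_sum_mul_mul_sub_one {X Y : Type*} [Fintype X] [Fintype Y]
    (K : X → Y → ℝ) (f p : X → ℝ) (g q : Y → ℝ)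
    (hKq : ∀ x, ∑ y, K x y * q y = 1) (hpK : ∀ y, ∑ x, p x * K x y = 1)
    (hp : ∑ x, p x = 1) (hf : ∑ x, f x = 1) (hg : ∑ y, g y = 1) :
    ∑ x, ∑ y, (f x - p x) * K x y * (g y - q y) = ∑ x, ∑ y, f x * K x y * g y - 1 := by
  have hfKq : ∑ x, ∑ y, f x * K x y * q y = 1 := by
    simp_rw [mul_assoc, ← mul_sum, hKq, mul_one, hf]
  have hpKq : ∑ x, ∑ y, p x * K x y * q y = 1 := by
    simp_rw [mul_assoc, ← mul_sum, hKq, mul_one, hp]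
  have hpKg : ∑ x, ∑ y, p x * K x y * g y = 1 := by
    rw [sum_comm]
    simp_rw [← sum_mul, hpK, one_mul, hg]
  simp only [sub_mul, mul_sub, sum_sub_distrib]
  linarith

theorem sum_sub_mul_div_mul_sub_eq_sum_mul_div_mul_sub_one {X Y : Type*} [Fintype X] [Fintype Y]
    (B : X → Y → ℝ) (f p : X → ℝ) (g q : Y → ℝ) (hp₀ : ∀ x, p x ≠ 0) (hq₀ : ∀ y, q y ≠ 0)
    (hrow : ∀ x, ∑ y, B x y = p x) (hcol : ∀ y, ∑ x, B x y = q y)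
    (hp : ∑ x, p x = 1) (hf : ∑ x, f x = 1) (hg : ∑ y, g y = 1) :
    ∑ x, ∑ y, (f x - p x) * (B x y / (p x * q y)) * (g y - q y)
      = ∑ x, ∑ y, f x * (B x y / (p x * q y)) * g y - 1 := by
  refine sum_sub_mul_mul_sub_eq_sum_mul_mul_sub_one _ _ _ _ _ (fun x => ?_) (fun y => ?_) hp hf hg
  · simp_rw [div_mul_eq_div_div, div_mul_cancel₀ _ (hq₀ _)]
    rw [← sum_div, hrow, div_self (hp₀ x)]
  · simp_rw [← mul_div_assoc, mul_div_mul_left _ _ (hp₀ _)]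
    rw [← sum_div, hcol, div_self (hq₀ y)]

theorem stmt_9_general {U X Y V : Type*} [Fintype U] [Fintype X] [Fintype Y] [Fintype V]
    (P : U → X → Y → V → ℝ)
    (hsum : ∑ u, ∑ x, ∑ y, ∑ v, P u x y v = 1)
    (PU : U → ℝ) (hPU : ∀ u, PU u = ∑ x, ∑ y, ∑ v, P u x y v)
    (PX : X → ℝ) (hPX : ∀ x, PX x = ∑ u, ∑ y, ∑ v, P u x y v)
    (PY : Y → ℝ) (hPY : ∀ y, PY y = ∑ u, ∑ x, ∑ v, P u x y v)
    (PV : V → ℝ) (hPV : ∀ v, PV v = ∑ u, ∑ x, ∑ y, P u x y v)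
    (hPUpos : ∀ u, 0 < PU u) (hPXpos : ∀ x, 0 < PX x)
    (hPYpos : ∀ y, 0 < PY y) (hPVpos : ∀ v, 0 < PV v)
    (hMarkov : ∀ u x y v, P u x y v * PX x * PY y =
        (∑ y', ∑ v', P u x y' v') * (∑ u', ∑ v', P u' x y v') * (∑ u', ∑ x', P u' x' y v)) :
    ∀ u v, (∑ x, ∑ y, P u x y v)
        = PU u * PV v * (1 + ∑ x, ∑ y,
            ((∑ y', ∑ v', P u x y' v') / PU u - PX x) *
            ((∑ u', ∑ v', P u' x y v') / (PX x * PY y)) *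
            ((∑ u', ∑ x', P u' x' y v) / PV v - PY y)) := by
  intro u v
  have hPX_marg : ∀ x, ∑ y, ∑ u', ∑ v', P u' x y v' = PX x := fun x => by rw [hPX, sum_comm]
  have hPY_marg : ∀ y, ∑ x, ∑ u', ∑ v', P u' x y v' = PY y := fun y => by rw [hPY, sum_comm]
  have hPV_marg : ∑ y, ∑ u', ∑ x', P u' x' y v = PV v := by
    rw [hPV, sum_comm]
    exact sum_congr rfl fun _ _ => sum_comm
  have hPX_sum : ∑ x, PX x = 1 := by
    rw [sum_congr rfl fun x _ => hPX x, sum_comm, hsum]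
  have hPU_ne := (hPUpos u).ne'
  have hPV_ne := (hPVpos v).ne'
  have hPX_cond : ∑ x, (∑ y', ∑ v', P u x y' v') / PU u = 1 := by
    rw [← sum_div, ← hPU, div_self hPU_ne]
  have hPY_cond : ∑ y, (∑ u', ∑ x', P u' x' y v) / PV v = 1 := by
    rw [← sum_div, hPV_marg, div_self hPV_ne]
  have hP_factor : ∀ x y, (∑ y', ∑ v', P u x y' v') / PU u
      * ((∑ u', ∑ v', P u' x y v') / (PX x * PY y)) * ((∑ u', ∑ x', P u' x' y v) / PV v)
      = P u x y v / (PU u * PV v) := fun x y => by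
    field_simp [(hPXpos x).ne', (hPYpos y).ne']
    linear_combination -hMarkov u x y v
  rw [sum_sub_mul_div_mul_sub_eq_sum_mul_div_mul_sub_one _ _ _ _ _ (fun x => (hPXpos x).ne')
    (fun y => (hPYpos y).ne') hPX_marg hPY_marg hPX_sum hPX_cond hPY_cond]
  simp_rw [hP_factor, ← sum_div]
  field_simp
  ring

theorem stmt_9 {U X Y V : Type*} [Fintype U] [Fintype X] [Fintype Y] [Fintype V]
    (P : U → X → Y → V → ℝ)
    (hP : ∀ u x y v, 0 ≤ P u x y v)
    (hsum : ∑ u, ∑ x, ∑ y, ∑ v, P u x y v = 1)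
    (PU : U → ℝ) (hPU : ∀ u, PU u = ∑ x, ∑ y, ∑ v, P u x y v)
    (PX : X → ℝ) (hPX : ∀ x, PX x = ∑ u, ∑ y, ∑ v, P u x y v)
    (PY : Y → ℝ) (hPY : ∀ y, PY y = ∑ u, ∑ x, ∑ v, P u x y v)
    (PV : V → ℝ) (hPV : ∀ v, PV v = ∑ u, ∑ x, ∑ y, P u x y v)
    (hPUpos : ∀ u, 0 < PU u) (hPXpos : ∀ x, 0 < PX x)
    (hPYpos : ∀ y, 0 < PY y) (hPVpos : ∀ v, 0 < PV v)
    (hMarkov : ∀ u x y v, P u x y v * PX x * PY y =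
        (∑ y', ∑ v', P u x y' v') * (∑ u', ∑ v', P u' x y v') * (∑ u', ∑ x', P u' x' y v)) :
    ∀ u v, (∑ x, ∑ y, P u x y v)
        = PU u * PV v * (1 + ∑ x, ∑ y,
            ((∑ y', ∑ v', P u x y' v') / PU u - PX x) *
            ((∑ u', ∑ v', P u' x y v') / (PX x * PY y)) *
            ((∑ u', ∑ x', P u' x' y v) / PV v - PY y)) :=
  stmt_9_general P hsum PU hPU PX hPX PY hPY PV hPV hPUpos hPXpos hPYpos hPVpos hMarkov
end

section
/- Let 𝒵, 𝒲₁, 𝒲₂ be finite sets and let P be a joint pmf for (Z, W₁, W₂) such that the marginals P_Z, P_{W₁}, P_{W₂} are strictly positive, W₁ and W₂ are independent (P_{W₁,W₂}(w₁,w₂) = P_{W₁}(w₁)·P_{W₂}(w₂) for all w₁,w₂), and W₁ and W₂ are conditionally independent given Z (P_{W₁,W₂|Z}(w₁,w₂|z) = P_{W₁|Z}(w₁|z)·P_{W₂|Z}(w₂|z) for all z,w₁,w₂). Then for every w₁ ∈ 𝒲₁ and w₂ ∈ 𝒲₂: Σ_z (P_{Z|W₁}(z|w₁) − P_Z(z))·(P_{Z|W₂}(z|w₂)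 − P_Z(z))/P_Z(z) = 0. -/
/-! Expanding the product, `∑ (x - p)(y - p)/p = ∑ x y / p - 1` whenever `x`, `y`, `p` each sum to `1`.
For `x = P_{Z|W₁=w₁}` and `y = P_{Z|W₂=w₂}`, conditional independence turns `x y / P_Z` into
`P_{Z,W₁,W₂}(·, w₁, w₂) / (P_{W₁}(w₁) P_{W₂}(w₂))`, which sums to `1` by independence of `W₁` and `W₂`. -/

open Finset

theorem Finset.sum_mul_sub_div_eq_sum_mul_div_sub_one {ι 𝕜 : Type*} [Field 𝕜] {s : Finset ι}
    {p x y : ι → 𝕜} (hp : ∀ i ∈ s, p i ≠ 0) (hp₁ : ∑ i ∈ s, p i = 1)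
    (hx₁ : ∑ i ∈ s, x i = 1) (hy₁ : ∑ i ∈ s, y i = 1) :
    ∑ i ∈ s, (x i - p i) * (y i - p i) / p i = ∑ i ∈ s, x i * y i / p i - 1 := by
  have expand : ∀ i ∈ s,
      (x i - p i) * (y i - p i) / p i = x i * y i / p i - x i - y i + p i := by
    intro i hi
    field_simp [hp i hi]
    ring
  rw [sum_congr rfl expand, sum_add_distrib, sum_sub_distrib, sum_sub_distrib, hx₁, hy₁, hp₁]
  ring

theorem stmt_10_general {Z W₁ W₂ : Type*} [Fintype Z] [Fintype W₁] [Fintype W₂]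
    (P : Z → W₁ → W₂ → ℝ)
    (hsum : ∑ z, ∑ w₁, ∑ w₂, P z w₁ w₂ = 1)
    (PZ : Z → ℝ) (hPZ : ∀ z, PZ z = ∑ w₁, ∑ w₂, P z w₁ w₂)
    (PW₁ : W₁ → ℝ) (hPW₁ : ∀ w₁, PW₁ w₁ = ∑ z, ∑ w₂, P z w₁ w₂)
    (PW₂ : W₂ → ℝ) (hPW₂ : ∀ w₂, PW₂ w₂ = ∑ z, ∑ w₁, P z w₁ w₂)
    (hPZpos : ∀ z, 0 < PZ z) (hPW₁pos : ∀ w₁, 0 < PW₁ w₁) (hPW₂pos : ∀ w₂, 0 < PW₂ w₂)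
    (hIndep : ∀ w₁ w₂, ∑ z, P z w₁ w₂ = PW₁ w₁ * PW₂ w₂)
    (hCondIndep : ∀ z w₁ w₂,
        P z w₁ w₂ * PZ z = (∑ w₂', P z w₁ w₂') * (∑ w₁', P z w₁' w₂)) :
    ∀ w₁ w₂, ∑ z, ((∑ w₂', P z w₁ w₂') / PW₁ w₁ - PZ z) *
        ((∑ w₁', P z w₁' w₂) / PW₂ w₂ - PZ z) / PZ z = 0 := by
  intro w₁ w₂
  have hPZ₁ : ∑ z, PZ z = 1 := by simpa only [← hPZ] using hsum
  have hW₁ : ∑ z, (∑ w₂', P z w₁ w₂') / PW₁ w₁ = 1 := by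
    rw [← sum_div, ← hPW₁, div_self (hPW₁pos w₁).ne']
  have hW₂ : ∑ z, (∑ w₁', P z w₁' w₂) / PW₂ w₂ = 1 := by
    rw [← sum_div, ← hPW₂, div_self (hPW₂pos w₂).ne']
  have hcross : ∑ z, (∑ w₂', P z w₁ w₂') / PW₁ w₁ * ((∑ w₁', P z w₁' w₂) / PW₂ w₂) / PZ z
      = 1 := by
    have hterm : ∀ z, (∑ w₂', P z w₁ w₂') / PW₁ w₁ * ((∑ w₁', P z w₁' w₂) / PW₂ w₂) / PZ z
        = P z w₁ w₂ / (PW₁ w₁ * PW₂ w₂) := by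
      intro z
      rw [div_mul_div_comm, div_div, ← hCondIndep,
        mul_div_mul_right _ _ (hPZpos z).ne']
    rw [sum_congr rfl fun z _ => hterm z, ← sum_div, hIndep,
      div_self (mul_pos (hPW₁pos w₁) (hPW₂pos w₂)).ne']
  rw [sum_mul_sub_div_eq_sum_mul_div_sub_one (fun z _ => (hPZpos z).ne') hPZ₁ hW₁ hW₂,
    hcross, sub_self]

theorem stmt_10 {Z W₁ W₂ : Type*} [Fintype Z] [Fintype W₁] [Fintype W₂]
    (P : Z → W₁ → W₂ → ℝ)
    (hP : ∀ z w₁ w₂, 0 ≤ P z w₁ w₂)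
    (hsum : ∑ z, ∑ w₁, ∑ w₂, P z w₁ w₂ = 1)
    (PZ : Z → ℝ) (hPZ : ∀ z, PZ z = ∑ w₁, ∑ w₂, P z w₁ w₂)
    (PW₁ : W₁ → ℝ) (hPW₁ : ∀ w₁, PW₁ w₁ = ∑ z, ∑ w₂, P z w₁ w₂)
    (PW₂ : W₂ → ℝ) (hPW₂ : ∀ w₂, PW₂ w₂ = ∑ z, ∑ w₁, P z w₁ w₂)
    (hPZpos : ∀ z, 0 < PZ z) (hPW₁pos : ∀ w₁, 0 < PW₁ w₁) (hPW₂pos : ∀ w₂, 0 < PW₂ w₂)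
    (hIndep : ∀ w₁ w₂, ∑ z, P z w₁ w₂ = PW₁ w₁ * PW₂ w₂)
    (hCondIndep : ∀ z w₁ w₂,
        P z w₁ w₂ * PZ z = (∑ w₂', P z w₁ w₂') * (∑ w₁', P z w₁' w₂)) :
    ∀ w₁ w₂, ∑ z, ((∑ w₂', P z w₁ w₂') / PW₁ w₁ - PZ z) *
        ((∑ w₁', P z w₁' w₂) / PW₂ w₂ - PZ z) / PZ z = 0 :=
  stmt_10_general P hsum PZ hPZ PW₁ hPW₁ PW₂ hPW₂ hPZpos hPW₁pos hPW₂pos hIndep hCondIndep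
end

section
/- Let Z be a random k₁×k₂ real matrix on a probability space with E[‖Z‖_F²] < ∞ that is spherically symmetric, i.e., for every pair of orthogonal matrices Q₁ ∈ O(k₁) and Q₂ ∈ O(k₂), the random matrix Q₁ᵀ Z Q₂ has the same distribution as Z. Then for any fixed (deterministic) matrices A₁ ∈ ℝ^{k₁×m₁} and A₂ ∈ ℝ^{k₂×m₂}: E[‖A₁ᵀ Z A₂‖_F²] = (1/(k₁·k₂))·‖A₁‖_F²·‖A₂‖_F²·E[‖Z‖_F²]. -/
open Matrix MeasureTheory

/-- The Frobenius norm of a real matrix. -/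
noncomputable def frobNorm {m n : Type*} [Fintype m] [Fintype n] (A : Matrix m n ℝ) : ℝ :=
  Real.sqrt (∑ i, ∑ j, A i j ^ 2)

/-- The squared Frobenius norm of a real matrix. -/
noncomputable def frobSq {m n : Type*} [Fintype m] [Fintype n] (A : Matrix m n ℝ) : ℝ :=
  ∑ i, ∑ j, A i j ^ 2

instance matrixMeasurableSpace {m n : Type*} : MeasurableSpace (Matrix m n ℝ) :=
  MeasurableSpace.pi

/-!
Conjugating `Z` by diagonal sign matrices shows that distinct entries of `Z` are uncorrelated,
and conjugating by permutation matrices shows that all entries have the same second moment `v`.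
Hence `E[(∑ a_x Z_x)²] = v ∑ a_x²` for every deterministic vector `a`; each entry of `B Z C` is
such a linear combination, which gives `E‖B Z C‖_F² = v ‖B‖_F² ‖C‖_F²`. Taking `B = A₁ᵀ, C = A₂`
and `B = C = 1` (so that `E‖Z‖_F² = k₁ k₂ v`) yields the claim.
-/

namespace Matrix

variable {l m n k : Type*} [Fintype m] [Fintype n]

lemma measurable_mul_mul (Q₁ : Matrix l m ℝ) (Q₂ : Matrix n k ℝ) :
    Measurable fun M : Matrix m n ℝ => Q₁ * M * Q₂ := by
  refine measurable_pi_lambda _ fun a => measurable_pi_lambda _ fun b => ?_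
  simp only [mul_apply]
  fun_prop

lemma mul_mul_apply_eq_sum (B : Matrix l m ℝ) (M : Matrix m n ℝ) (C : Matrix n k ℝ)
    (p : l) (q : k) :
    (B * M * C) p q = ∑ x : m × n, B p x.1 * C x.2 q * M x.1 x.2 := by
  simp only [mul_apply, Finset.sum_mul, Fintype.sum_prod_type]
  rw [Finset.sum_comm]
  exact Finset.sum_congr rfl fun _ _ => Finset.sum_congr rfl fun _ _ => by ring

lemma sq_le_frobSq (M : Matrix m n ℝ) (i : m) (j : n) : M i j ^ 2 ≤ frobSq M :=
  calc M i j ^ 2 ≤ ∑ j', M i j' ^ 2 :=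
        Finset.single_le_sum (fun _ _ => sq_nonneg _) (Finset.mem_univ j)
    _ ≤ frobSq M :=
        Finset.single_le_sum (f := fun i' => ∑ j', M i' j' ^ 2)
          (fun _ _ => Finset.sum_nonneg fun _ _ => sq_nonneg _) (Finset.mem_univ i)

lemma frobSq_transpose (A : Matrix m n ℝ) : frobSq Aᵀ = frobSq A := Finset.sum_comm

lemma frobSq_one [DecidableEq m] : frobSq (1 : Matrix m m ℝ) = Fintype.card m := by
  simp [frobSq, one_apply]

lemma sum_sum_sum_mul_sq_eq_frobSq_mul_frobSq [Fintype l] [Fintype k] (B : Matrix l m ℝ)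
    (C : Matrix n k ℝ) :
    ∑ p, ∑ q, ∑ x : m × n, (B p x.1 * C x.2 q) ^ 2 = frobSq B * frobSq C := by
  rw [← frobSq_transpose C]
  simp only [frobSq, mul_pow, Fintype.sum_prod_type, ← Finset.sum_mul_sum, transpose_apply]

end Matrix

open Matrix

lemma integral_sq_sum_mul_of_isotropic {Ω ι : Type*} [MeasurableSpace Ω] {μ : Measure Ω}
    [Fintype ι] [DecidableEq ι] {X : Ω → ι → ℝ} {v : ℝ} (hX : ∀ x, MemLp (fun ω => X ω x) 2 μ)
    (hcov : ∀ x y, ∫ ω, X ω x * X ω y ∂μ = if x = y then v else 0) (a : ι → ℝ) :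
    ∫ ω, (∑ x, a x * X ω x) ^ 2 ∂μ = v * ∑ x, a x ^ 2 := by
  have hint : ∀ x y, Integrable (fun ω => a x * a y * (X ω x * X ω y)) μ := fun x y =>
    ((hX x).integrable_mul (hX y)).const_mul _
  calc ∫ ω, (∑ x, a x * X ω x) ^ 2 ∂μ
      = ∫ ω, ∑ x, ∑ y, a x * a y * (X ω x * X ω y) ∂μ := by
        congr 1; ext ω
        rw [sq, Finset.sum_mul_sum]
        exact Finset.sum_congr rfl fun _ _ => Finset.sum_congr rfl fun _ _ => by ring
    _ = ∑ x, ∑ y, a x * a y * ∫ ω, X ω x * X ω y ∂μ := by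
        rw [integral_finsetSum _ fun x _ => integrable_finsetSum _ fun y _ => hint x y]
        refine Finset.sum_congr rfl fun x _ => ?_
        rw [integral_finsetSum _ fun y _ => hint x y]
        exact Finset.sum_congr rfl fun y _ => integral_const_mul _ _
    _ = v * ∑ x, a x ^ 2 := by
        simp only [hcov, mul_ite, mul_zero, Finset.sum_ite_eq, Finset.mem_univ, if_true,
          Finset.mul_sum]
        exact Finset.sum_congr rfl fun _ _ => by ring

lemma update_one_neg_one_mul_self {ι : Type*} [DecidableEq ι] (c a : ι) :
    Function.update (1 : ι → ℝ) c (-1) a * Function.update (1 : ι → ℝ) c (-1) a = 1 := by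
  by_cases h : a = c <;> simp [h]

section

variable {Ω m n : Type*} [MeasurableSpace Ω] {μ : Measure Ω} [Fintype m] [Fintype n]
  [DecidableEq m] [DecidableEq n] {Z : Ω → Matrix m n ℝ}

def SphericallySymmetric (μ : Measure Ω) (Z : Ω → Matrix m n ℝ) : Prop :=
  ∀ (Q₁ : Matrix m m ℝ) (Q₂ : Matrix n n ℝ), Q₁ᵀ * Q₁ = 1 → Q₂ᵀ * Q₂ = 1 →
    Measure.map (fun ω => Q₁ᵀ * Z ω * Q₂) μ = Measure.map Z μ

namespace SphericallySymmetric

lemma integral_comp (hsym : SphericallySymmetric μ Z) (hZ : Measurable Z)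
    {Q₁ : Matrix m m ℝ} {Q₂ : Matrix n n ℝ} (h₁ : Q₁ᵀ * Q₁ = 1)
    (h₂ : Q₂ᵀ * Q₂ = 1) {g : Matrix m n ℝ → ℝ} (hg : Measurable g) :
    ∫ ω, g (Q₁ᵀ * Z ω * Q₂) ∂μ = ∫ ω, g (Z ω) ∂μ := by
  have hQ : Measurable fun ω => Q₁ᵀ * Z ω * Q₂ := (measurable_mul_mul Q₁ᵀ Q₂).comp hZ
  rw [← integral_map hQ.aemeasurable hg.aestronglyMeasurable, hsym Q₁ Q₂ h₁ h₂,
    integral_map hZ.aemeasurable hg.aestronglyMeasurable]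

lemma integral_comp_submatrix (hsym : SphericallySymmetric μ Z) (hZ : Measurable Z)
    (σ : Equiv.Perm m) (τ : Equiv.Perm n) {g : Matrix m n ℝ → ℝ}
    (hg : Measurable g) :
    ∫ ω, g ((Z ω).submatrix σ τ) ∂μ = ∫ ω, g (Z ω) ∂μ := by
  have h := hsym.integral_comp hZ (Q₁ := σ⁻¹.permMatrix ℝ) (Q₂ := τ⁻¹.permMatrix ℝ)
    (by simp [← permMatrix_mul]) (by simp [← permMatrix_mul]) hg
  simpa [PEquiv.toMatrix_toPEquiv_mul, PEquiv.mul_toMatrix_toPEquiv, Equiv.Perm.inv_def] using h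

lemma integral_comp_diagonal (hsym : SphericallySymmetric μ Z) (hZ : Measurable Z)
    {d : m → ℝ} {e : n → ℝ} (hd : ∀ i, d i * d i = 1)
    (he : ∀ j, e j * e j = 1) {g : Matrix m n ℝ → ℝ} (hg : Measurable g) :
    ∫ ω, g (diagonal d * Z ω * diagonal e) ∂μ = ∫ ω, g (Z ω) ∂μ := by
  have h := hsym.integral_comp hZ (Q₁ := diagonal d) (Q₂ := diagonal e)
    (by simp [diagonal_mul_diagonal, hd]) (by simp [diagonal_mul_diagonal, he]) hg
  simpa using h

lemma integral_entry_mul_entry_eq_mul (hsym : SphericallySymmetric μ Z) (hZ : Measurable Z)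
    {d : m → ℝ} {e : n → ℝ} (hd : ∀ i, d i * d i = 1)
    (he : ∀ j, e j * e j = 1) (i i' : m) (j j' : n) :
    ∫ ω, Z ω i j * Z ω i' j' ∂μ = d i * d i' * (e j * e j') * ∫ ω, Z ω i j * Z ω i' j' ∂μ := by
  have h := hsym.integral_comp_diagonal hZ hd he (g := fun M => M i j * M i' j') (by fun_prop)
  simp only [diagonal_mul, mul_diagonal] at h
  rw [← integral_const_mul, ← h]
  exact integral_congr_ae (ae_of_all _ fun ω => by ring)

lemma integral_entry_mul_entry_of_ne (hsym : SphericallySymmetric μ Z) (hZ : Measurable Z)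
    {i i' : m} {j j' : n} (hne : (i, j) ≠ (i', j')) :
    ∫ ω, Z ω i j * Z ω i' j' ∂μ = 0 := by
  by_cases hi : i = i'
  · have hj : j ≠ j' := fun hj => hne (by rw [hi, hj])
    have h := hsym.integral_entry_mul_entry_eq_mul hZ (d := 1) (fun _ => mul_one 1)
      (update_one_neg_one_mul_self j) i i' j j'
    simp [Ne.symm hj] at h
    linarith
  · have h := hsym.integral_entry_mul_entry_eq_mul hZ (update_one_neg_one_mul_self i)
      (e := 1) (fun _ => mul_one 1) i i' j j'
    simp [Ne.symm hi] at h
    linarith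

lemma integral_sq_entry_eq (hsym : SphericallySymmetric μ Z) (hZ : Measurable Z)
    (i i' : m) (j j' : n) :
    ∫ ω, Z ω i j ^ 2 ∂μ = ∫ ω, Z ω i' j' ^ 2 ∂μ := by
  have h := hsym.integral_comp_submatrix hZ (Equiv.swap i i') (Equiv.swap j j')
    (g := fun M => M i j ^ 2) (by fun_prop)
  simpa using h.symm

lemma exists_integral_mul_eq_ite (hsym : SphericallySymmetric μ Z) (hZ : Measurable Z) :
    ∃ v, ∀ x y : m × n, ∫ ω, Z ω x.1 x.2 * Z ω y.1 y.2 ∂μ = if x = y then v else 0 := by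
  rcases isEmpty_or_nonempty (m × n) with hmn | ⟨⟨i₀, j₀⟩⟩
  · exact ⟨0, fun x => isEmptyElim x⟩
  refine ⟨∫ ω, Z ω i₀ j₀ ^ 2 ∂μ, fun x y => ?_⟩
  split_ifs with hxy
  · subst hxy
    simpa only [sq] using hsym.integral_sq_entry_eq hZ x.1 i₀ x.2 j₀
  · exact hsym.integral_entry_mul_entry_of_ne hZ hxy

end SphericallySymmetric

end

section FrobeniusMoment

variable {Ω m n : Type*} [MeasurableSpace Ω] {μ : Measure Ω} [Fintype m] [Fintype n]
  {Z : Ω → Matrix m n ℝ}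

lemma memLp_two_entry (hZ : Measurable Z) (hint : Integrable (fun ω => frobSq (Z ω)) μ)
    (i : m) (j : n) : MemLp (fun ω => Z ω i j) 2 μ := by
  have hZij : Measurable fun ω => Z ω i j := by fun_prop
  refine (memLp_two_iff_integrable_sq hZij.aestronglyMeasurable).2 ?_
  refine hint.mono' (hZij.pow_const 2).aestronglyMeasurable (ae_of_all _ fun ω => ?_)
  simpa using sq_le_frobSq (Z ω) i j

lemma integral_frobSq_mul_mul_of_isotropic [DecidableEq m] [DecidableEq n] {l k : Type*}
    [Fintype l] [Fintype k] {v : ℝ} (hZ : ∀ i j, MemLp (fun ω => Z ω i j) 2 μ)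
    (hcov : ∀ x y : m × n, ∫ ω, Z ω x.1 x.2 * Z ω y.1 y.2 ∂μ = if x = y then v else 0)
    (B : Matrix l m ℝ) (C : Matrix n k ℝ) :
    ∫ ω, frobSq (B * Z ω * C) ∂μ = v * (frobSq B * frobSq C) := by
  have hint : ∀ p q, Integrable
      (fun ω => (∑ x : m × n, B p x.1 * C x.2 q * Z ω x.1 x.2) ^ 2) μ := fun p q =>
    (memLp_finsetSum _ fun x _ => (hZ x.1 x.2).const_mul _).integrable_sq
  calc ∫ ω, frobSq (B * Z ω * C) ∂μ
      = ∑ p, ∑ q, ∫ ω, (∑ x : m × n, B p x.1 * C x.2 q * Z ω x.1 x.2) ^ 2 ∂μ := by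
        unfold frobSq
        simp only [mul_mul_apply_eq_sum]
        rw [integral_finsetSum _ fun p _ => integrable_finsetSum _ fun q _ => hint p q]
        exact Finset.sum_congr rfl fun p _ => integral_finsetSum _ fun q _ => hint p q
    _ = ∑ p, ∑ q, v * ∑ x : m × n, (B p x.1 * C x.2 q) ^ 2 := by
        refine Finset.sum_congr rfl fun p _ => Finset.sum_congr rfl fun q _ => ?_
        exact integral_sq_sum_mul_of_isotropic (fun x : m × n => hZ x.1 x.2) hcov _
    _ = v * (frobSq B * frobSq C) := by
        simp only [← sum_sum_sum_mul_sq_eq_frobSq_mul_frobSq, Finset.mul_sum]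

end FrobeniusMoment

theorem stmt_11_general {Ω : Type*} [MeasurableSpace Ω] (μ : Measure Ω)
    {k₁ k₂ m₁ m₂ : ℕ}
    (Z : Ω → Matrix (Fin k₁) (Fin k₂) ℝ) (hZmeas : Measurable Z)
    (hZint : Integrable (fun ω => frobSq (Z ω)) μ)
    (hsym : ∀ (Q₁ : Matrix (Fin k₁) (Fin k₁) ℝ) (Q₂ : Matrix (Fin k₂) (Fin k₂) ℝ),
      Q₁ᵀ * Q₁ = 1 → Q₂ᵀ * Q₂ = 1 →
      Measure.map (fun ω => Q₁ᵀ * Z ω * Q₂) μ = Measure.map Z μ)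
    (A₁ : Matrix (Fin k₁) (Fin m₁) ℝ) (A₂ : Matrix (Fin k₂) (Fin m₂) ℝ) :
    ∫ ω, frobSq (A₁ᵀ * Z ω * A₂) ∂μ =
      (1 / ((k₁ : ℝ) * (k₂ : ℝ))) * frobSq A₁ * frobSq A₂ * ∫ ω, frobSq (Z ω) ∂μ := by
  obtain ⟨v, hcov⟩ := SphericallySymmetric.exists_integral_mul_eq_ite hsym hZmeas
  have hL2 := memLp_two_entry hZmeas hZint
  have hA := integral_frobSq_mul_mul_of_isotropic hL2 hcov A₁ᵀ A₂
  have hI := integral_frobSq_mul_mul_of_isotropic hL2 hcov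
    (1 : Matrix (Fin k₁) (Fin k₁) ℝ) (1 : Matrix (Fin k₂) (Fin k₂) ℝ)
  simp only [Matrix.one_mul, Matrix.mul_one, frobSq_one, frobSq_transpose, Fintype.card_fin]
    at hA hI
  rw [hA, hI]
  rcases Nat.eq_zero_or_pos k₁ with rfl | hk₁
  · simp [frobSq]
  rcases Nat.eq_zero_or_pos k₂ with rfl | hk₂
  · simp [frobSq]
  field_simp

theorem stmt_11 {Ω : Type*} [MeasurableSpace Ω] (μ : Measure Ω) [IsProbabilityMeasure μ]
    {k₁ k₂ m₁ m₂ : ℕ}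
    (Z : Ω → Matrix (Fin k₁) (Fin k₂) ℝ) (hZmeas : Measurable Z)
    (hZint : Integrable (fun ω => frobSq (Z ω)) μ)
    (hsym : ∀ (Q₁ : Matrix (Fin k₁) (Fin k₁) ℝ) (Q₂ : Matrix (Fin k₂) (Fin k₂) ℝ),
      Q₁ᵀ * Q₁ = 1 → Q₂ᵀ * Q₂ = 1 →
      Measure.map (fun ω => Q₁ᵀ * Z ω * Q₂) μ = Measure.map Z μ)
    (A₁ : Matrix (Fin k₁) (Fin m₁) ℝ) (A₂ : Matrix (Fin k₂) (Fin m₂) ℝ) :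
    ∫ ω, frobSq (A₁ᵀ * Z ω * A₂) ∂μ =
      (1 / ((k₁ : ℝ) * (k₂ : ℝ))) * frobSq A₁ * frobSq A₂ * ∫ ω, frobSq (Z ω) ∂μ :=
  stmt_11_general μ Z hZmeas hZint hsym A₁ A₂
end

section
/- Let A₁, A₂ ∈ ℝ^{k₁×k₂} and k ∈ {1,…,min(k₁,k₂)}. Let Ψ₁ ∈ ℝ^{k₂×k} (respectively Ψ₂ ∈ ℝ^{k₂×k}) be any matrix whose columns are orthonormal and whose i-th column is an eigenvector of A₁ᵀA₁ (respectively A₂ᵀA₂) with eigenvalue σ_i(A₁)² (respectively σ_i(A₂)²), for i = 1,…,k. Then 0 ≤ ‖A₁Ψ₁‖_F² − ‖A₁Ψ₂‖_F² ≤ 4k·‖A₁‖₂·‖A₁ − A₂‖₂, and moreover ‖A₁Ψ₁‖_F² − ‖A₁Ψ₂‖_F² ≤ 4√k·‖A₁‖₂·‖A₁ − A₂‖_F. -/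
open Matrix

/-!
Write `Δ = A₁ - A₂`, `s = ‖A₁Ψ₁‖_F` and `x = ‖A₁Ψ₂‖_F`. By Ky Fan's maximum principle,
`‖AΨ‖_F² ≤ σ₁(A)² + ⋯ + σ_k(A)²` for every `Ψ` with `k` orthonormal columns, with equality when the
columns are top right singular vectors. Hence `x ≤ s` and `‖A₂Ψ₁‖_F ≤ ‖A₂Ψ₂‖_F`, and two triangle
inequalities give `s - x ≤ ‖ΔΨ₁‖_F + ‖ΔΨ₂‖_F`, so `s² - x² ≤ 2s (‖ΔΨ₁‖_F + ‖ΔΨ₂‖_F)`. Finally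
`s ≤ √k σ₁(A₁)`, and each `‖ΔΨᵢ‖_F` is at most `√k σ₁(Δ)` (Ky Fan again) and at most `‖Δ‖_F`.

Ky Fan's principle and `‖AΨ‖_F ≤ ‖A‖_F` both come from writing `‖AΨ‖_F² = ∑ⱼ λⱼ cⱼ` in an
orthonormal eigenbasis of `AᵀA`: the weights `cⱼ` are the diagonal entries of an orthogonal
projection of rank `k`, so they lie in `[0, 1]` and sum to `k`.
-/

open Finset in
theorem sum_mul_le_sum_of_threshold {ι : Type*} [Fintype ι] [DecidableEq ι] (μ c : ι → ℝ)
    (S : Finset ι) (t : ℝ) (hS : ∀ i ∈ S, t ≤ μ i) (hSc : ∀ i ∉ S, μ i ≤ t)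
    (hc₀ : ∀ i, 0 ≤ c i) (hc₁ : ∀ i, c i ≤ 1) (hc : ∑ i, c i = #S) :
    ∑ i, μ i * c i ≤ ∑ i ∈ S, μ i := by
  calc ∑ i, μ i * c i ≤ ∑ i, (t * c i + if i ∈ S then μ i - t else 0) := by
        refine sum_le_sum fun i _ => ?_
        split_ifs with hi
        · nlinarith [hS i hi, hc₀ i, hc₁ i]
        · nlinarith [hSc i hi, hc₀ i]
    _ = ∑ i ∈ S, μ i := by
        rw [sum_add_distrib, ← mul_sum, hc, sum_ite_mem, univ_inter, sum_sub_distrib, sum_const,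
          nsmul_eq_mul]
        ring

theorem Antitone.sum_mul_le_sum_castLE {N k : ℕ} {μ : Fin N → ℝ} (hμ : Antitone μ) (hk : k ≤ N)
    (c : Fin N → ℝ) (hc₀ : ∀ i, 0 ≤ c i) (hc₁ : ∀ i, c i ≤ 1) (hc : ∑ i, c i = k) :
    ∑ i, μ i * c i ≤ ∑ i : Fin k, μ (Fin.castLE hk i) := by
  rcases Nat.eq_zero_or_pos N with rfl | hN
  · obtain rfl := Nat.le_zero.1 hk
    simp
  set S := Finset.univ.map (Fin.castLEEmb hk)
  have hmem : ∀ i, i ∈ S ↔ (i : ℕ) < k := fun i =>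
    ⟨fun h => by obtain ⟨a, -, rfl⟩ := Finset.mem_map.1 h; exact a.2,
     fun h => Finset.mem_map.2 ⟨⟨i, h⟩, Finset.mem_univ _, rfl⟩⟩
  -- `k - 1` is truncated at `0`, so for `k = 0` the threshold is the largest value
  have key := sum_mul_le_sum_of_threshold μ c S (μ ⟨k - 1, by omega⟩)
    (fun i hi => hμ (Fin.mk_le_mk.2 (by have := (hmem i).1 hi; omega)))
    (fun i hi => hμ (Fin.mk_le_mk.2 (by have := mt (hmem i).2 hi; omega)))
    hc₀ hc₁ (by simpa [S] using hc)
  simpa [S] using key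

theorem Matrix.IsHermitian.ithLargest_eigenvalues {n : Type*} [Fintype n] [DecidableEq n]
    {A : Matrix n n ℝ} (hA : A.IsHermitian) {i : ℕ} (hi : i < Fintype.card n) :
    ithLargest hA.eigenvalues i = hA.eigenvalues₀ ⟨i, hi⟩ := by
  have hmap : Finset.univ.val.map hA.eigenvalues = ↑(List.ofFn hA.eigenvalues₀).reverse := by
    rw [Multiset.coe_reverse, ← Fin.univ_val_map,
      show hA.eigenvalues = hA.eigenvalues₀ ∘ _ from rfl, ← Multiset.map_map,
      Multiset.map_univ_val_equiv]
  have hsorted : ((List.ofFn hA.eigenvalues₀).reverse).Pairwise (· ≤ ·) :=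
    List.pairwise_reverse.2 (List.sortedGE_iff_pairwise.1 hA.eigenvalues₀_antitone.sortedGE_ofFn)
  rw [ithLargest, hmap, Multiset.coe_sort, List.mergeSort_of_pairwise (by simpa using hsorted),
    List.reverse_reverse]
  simp [hi]

theorem transpose_mul_self_eq_one_iff {n p : Type*} [Fintype n] [DecidableEq p]
    (Ψ : Matrix n p ℝ) :
    Ψᵀ * Ψ = 1 ↔ ∀ i j, ∑ x, Ψ x i * Ψ x j = if i = j then (1 : ℝ) else 0 := by
  simp only [← ext_iff, mul_apply, transpose_apply, one_apply]

section Frobenius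

variable {m n p : Type*} [Fintype m] [Fintype n] [Fintype p]

theorem frobSq_eq_trace (B : Matrix m n ℝ) : frobSq B = trace (Bᵀ * B) := by
  simp only [frobSq, trace, diag, mul_apply, transpose_apply, ← sq]
  exact Finset.sum_comm

theorem frobNorm_nonneg (B : Matrix m n ℝ) : 0 ≤ frobNorm B := Real.sqrt_nonneg _

theorem sq_frobNorm (B : Matrix m n ℝ) : frobNorm B ^ 2 = frobSq B :=
  Real.sq_sqrt (Finset.sum_nonneg fun _ _ => Finset.sum_nonneg fun _ _ => sq_nonneg _)

open scoped Matrix.Norms.Frobenius in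
theorem frobNorm_eq_norm (B : Matrix m n ℝ) : frobNorm B = ‖B‖ := by
  simp only [frobNorm, frobenius_norm_def, Real.norm_eq_abs, Real.rpow_two, sq_abs,
    Real.sqrt_eq_rpow, one_div]

open scoped Matrix.Norms.Frobenius in
theorem frobNorm_sub_frobNorm_le (A B : Matrix m n ℝ) :
    frobNorm A - frobNorm B ≤ frobNorm (A - B) := by
  simpa only [frobNorm_eq_norm] using norm_sub_norm_le A B

open scoped Matrix.Norms.Frobenius in
theorem frobNorm_sub_comm (A B : Matrix m n ℝ) : frobNorm (A - B) = frobNorm (B - A) := by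
  simpa only [frobNorm_eq_norm] using norm_sub_rev A B

theorem mul_transpose_apply_self_le_one [DecidableEq p] {Φ : Matrix n p ℝ} (hΦ : Φᵀ * Φ = 1)
    (j : n) : (Φ * Φᵀ) j j ≤ 1 := by
  set P := Φ * Φᵀ
  have hP : P * P = P := by rw [Matrix.mul_assoc, ← Matrix.mul_assoc Φᵀ, hΦ, Matrix.one_mul]
  have hdiag : P j j = ∑ l, P j l ^ 2 := by
    have hsymm : Pᵀ = P := by simp only [P, transpose_mul, transpose_transpose]
    conv_lhs => rw [← hP]
    simp only [mul_apply, sq]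
    exact Finset.sum_congr rfl fun l _ => congr_arg (P j l * ·) (congrFun (congrFun hsymm j) l)
  have : P j j ^ 2 ≤ P j j := hdiag ▸ Finset.single_le_sum (f := fun l => P j l ^ 2)
    (fun _ _ => sq_nonneg _) (Finset.mem_univ j)
  nlinarith

theorem frobSq_mul_eq_sum_of_mulVec_eq [DecidableEq p] (A : Matrix m n ℝ) {Ψ : Matrix n p ℝ}
    (hΨ : Ψᵀ * Ψ = 1) (μ : p → ℝ)
    (hμ : ∀ i, (Aᵀ * A) *ᵥ (fun x => Ψ x i) = fun x => μ i * Ψ x i) :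
    frobSq (A * Ψ) = ∑ i, μ i := by
  have hcol : Aᵀ * A * Ψ = Ψ * diagonal μ := by
    ext x i
    rw [mul_diagonal, mul_comm]
    simpa [mul_apply, mulVec, dotProduct] using congrFun (hμ i) x
  rw [frobSq_eq_trace, transpose_mul, Matrix.mul_assoc, ← Matrix.mul_assoc Aᵀ, hcol,
    ← Matrix.mul_assoc, hΨ, Matrix.one_mul, trace_diagonal]

theorem frobSq_sub_frobSq_le {A₁ A₂ : Matrix m n ℝ} {Ψ₁ Ψ₂ : Matrix n p ℝ} {a d : ℝ}
    (h₁ : frobSq (A₁ * Ψ₂) ≤ frobSq (A₁ * Ψ₁)) (h₂ : frobSq (A₂ * Ψ₁) ≤ frobSq (A₂ * Ψ₂))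
    (ha : frobNorm (A₁ * Ψ₁) ≤ a) (hd₁ : frobNorm ((A₁ - A₂) * Ψ₁) ≤ d)
    (hd₂ : frobNorm ((A₁ - A₂) * Ψ₂) ≤ d) :
    frobSq (A₁ * Ψ₁) - frobSq (A₁ * Ψ₂) ≤ 4 * a * d := by
  have hx : frobNorm (A₁ * Ψ₂) ≤ frobNorm (A₁ * Ψ₁) := Real.sqrt_le_sqrt h₁
  have hab : frobNorm (A₂ * Ψ₁) ≤ frobNorm (A₂ * Ψ₂) := Real.sqrt_le_sqrt h₂
  have hc₁ := frobNorm_sub_frobNorm_le (A₁ * Ψ₁) (A₂ * Ψ₁)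
  have hc₂ := frobNorm_sub_frobNorm_le (A₂ * Ψ₂) (A₁ * Ψ₂)
  rw [← Matrix.sub_mul] at hc₁
  rw [frobNorm_sub_comm, ← Matrix.sub_mul] at hc₂
  have hx₀ := frobNorm_nonneg (A₁ * Ψ₂)
  have hd₀ := frobNorm_nonneg ((A₁ - A₂) * Ψ₁)
  calc frobSq (A₁ * Ψ₁) - frobSq (A₁ * Ψ₂)
      = (frobNorm (A₁ * Ψ₁) - frobNorm (A₁ * Ψ₂)) * (frobNorm (A₁ * Ψ₁) + frobNorm (A₁ * Ψ₂)) := by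
        rw [← sq_frobNorm, ← sq_frobNorm]; ring
    _ ≤ (2 * d) * (2 * a) := mul_le_mul (by linarith) (by linarith) (by linarith) (by linarith)
    _ = 4 * a * d := by ring

theorem exists_frobSq_mul_eq_sum_eigenvalues_mul [DecidableEq n] [DecidableEq p]
    (A : Matrix m n ℝ) {Ψ : Matrix n p ℝ} (hΨ : Ψᵀ * Ψ = 1) :
    ∃ c : n → ℝ, (∀ j, 0 ≤ c j) ∧ (∀ j, c j ≤ 1) ∧ ∑ j, c j = Fintype.card p ∧
      frobSq (A * Ψ) = ∑ j, (isHermitian_conjTranspose_mul_self A).eigenvalues j * c j := by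
  set hM := isHermitian_conjTranspose_mul_self A
  set U : Matrix n n ℝ := (hM.eigenvectorUnitary : Matrix n n ℝ)
  have hU : U * Uᵀ = 1 := by
    have := Unitary.coe_mul_star_self hM.eigenvectorUnitary
    rwa [Unitary.coe_star, star_eq_conjTranspose,
      conjTranspose_eq_transpose_of_trivial (hM.eigenvectorUnitary : Matrix n n ℝ)] at this
  have hM_eq : Aᵀ * A = U * diagonal hM.eigenvalues * Uᵀ :=
    calc Aᵀ * A = Aᴴ * A := by rw [conjTranspose_eq_transpose_of_trivial]
      _ = _ := hM.spectral_theorem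
      _ = U * diagonal hM.eigenvalues * Uᵀ := by
        simp [U, Unitary.conjStarAlgAut_apply, star_eq_conjTranspose]
  set Φ := Uᵀ * Ψ
  have hΦ : Φᵀ * Φ = 1 := by
    rw [transpose_mul, transpose_transpose, Matrix.mul_assoc, ← Matrix.mul_assoc U, hU,
      Matrix.one_mul, hΨ]
  refine ⟨fun j => (Φ * Φᵀ) j j, fun j => ?_, mul_transpose_apply_self_le_one hΦ, ?_, ?_⟩
  · simp only [mul_apply, transpose_apply]
    exact Finset.sum_nonneg fun _ _ => mul_self_nonneg _
  · exact (trace_mul_comm Φ Φᵀ).trans (by rw [hΦ, trace_one])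
  · have : frobSq (A * Ψ) = trace (diagonal hM.eigenvalues * (Φ * Φᵀ)) := by
      rw [frobSq_eq_trace, transpose_mul, Matrix.mul_assoc, ← Matrix.mul_assoc Aᵀ, hM_eq]
      rw [trace_mul_comm Ψᵀ]
      simp only [Matrix.mul_assoc]
      rw [trace_mul_comm U]
      simp only [Φ, transpose_mul, transpose_transpose, Matrix.mul_assoc]
    simp [this, trace, diagonal_mul]

end Frobenius

section SingularValue

variable {m n : Type*} [Fintype m] [Fintype n] [DecidableEq n]

theorem singularValue_nonneg (A : Matrix m n ℝ) (i : ℕ) : 0 ≤ singularValue A i :=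
  Real.sqrt_nonneg _

theorem singularValue_eq_sqrt_eigenvalues₀ (A : Matrix m n ℝ) {i : ℕ}
    (hi : i < Fintype.card n) :
    singularValue A i = √((isHermitian_conjTranspose_mul_self A).eigenvalues₀ ⟨i, hi⟩) := by
  rw [singularValue, IsHermitian.ithLargest_eigenvalues]

theorem sq_singularValue (A : Matrix m n ℝ) {i : ℕ} (hi : i < Fintype.card n) :
    singularValue A i ^ 2 = (isHermitian_conjTranspose_mul_self A).eigenvalues₀ ⟨i, hi⟩ := by
  rw [singularValue_eq_sqrt_eigenvalues₀ A hi, Real.sq_sqrt]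
  simpa [IsHermitian.eigenvalues] using eigenvalues_conjTranspose_mul_self_nonneg A
    (Fintype.equivOfCardEq (Fintype.card_fin _) ⟨i, hi⟩)

theorem singularValue_le_singularValue_zero (A : Matrix m n ℝ) {i : ℕ}
    (hi : i < Fintype.card n) :
    singularValue A i ≤ singularValue A 0 := by
  rw [singularValue_eq_sqrt_eigenvalues₀ A hi,
    singularValue_eq_sqrt_eigenvalues₀ A ((Nat.zero_le i).trans_lt hi)]
  exact Real.sqrt_le_sqrt (IsHermitian.eigenvalues₀_antitone _ (Fin.mk_le_mk.2 (Nat.zero_le i)))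

theorem frobSq_mul_le_sum_sq_singularValue (A : Matrix m n ℝ) {k : ℕ} {Ψ : Matrix n (Fin k) ℝ}
    (hΨ : Ψᵀ * Ψ = 1) (hk : k ≤ Fintype.card n) :
    frobSq (A * Ψ) ≤ ∑ i : Fin k, singularValue A i ^ 2 := by
  obtain ⟨c, hc₀, hc₁, hc, hA⟩ := exists_frobSq_mul_eq_sum_eigenvalues_mul A hΨ
  set hM := isHermitian_conjTranspose_mul_self A
  set e := Fintype.equivOfCardEq (Fintype.card_fin (Fintype.card n))
  calc frobSq (A * Ψ) = ∑ i, hM.eigenvalues₀ i * c (e i) := by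
        rw [hA, ← e.sum_comp]
        simp [IsHermitian.eigenvalues, e]
    _ ≤ ∑ i : Fin k, hM.eigenvalues₀ (Fin.castLE hk i) :=
        hM.eigenvalues₀_antitone.sum_mul_le_sum_castLE hk _ (fun _ => hc₀ _) (fun _ => hc₁ _)
          (by rw [e.sum_comp, hc, Fintype.card_fin])
    _ = ∑ i : Fin k, singularValue A i ^ 2 :=
        Finset.sum_congr rfl fun i _ => (sq_singularValue A _).symm

theorem frobSq_mul_le_frobSq {p : Type*} [Fintype p] [DecidableEq p] (A : Matrix m n ℝ)
    {Ψ : Matrix n p ℝ} (hΨ : Ψᵀ * Ψ = 1) : frobSq (A * Ψ) ≤ frobSq A := by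
  obtain ⟨c, -, hc₁, -, hA⟩ := exists_frobSq_mul_eq_sum_eigenvalues_mul A hΨ
  set hM := isHermitian_conjTranspose_mul_self A
  calc frobSq (A * Ψ) = ∑ j, hM.eigenvalues j * c j := hA
    _ ≤ ∑ j, hM.eigenvalues j := Finset.sum_le_sum fun j _ =>
        mul_le_of_le_one_right (eigenvalues_conjTranspose_mul_self_nonneg A j) (hc₁ j)
    _ = trace (Aᴴ * A) := by
        rw [hM.trace_eq_sum_eigenvalues]
        simp only [RCLike.ofReal_real_eq_id, id]
    _ = frobSq A := by rw [conjTranspose_eq_transpose_of_trivial, frobSq_eq_trace]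

theorem frobNorm_mul_le_frobNorm {p : Type*} [Fintype p] [DecidableEq p] (A : Matrix m n ℝ)
    {Ψ : Matrix n p ℝ} (hΨ : Ψᵀ * Ψ = 1) : frobNorm (A * Ψ) ≤ frobNorm A :=
  Real.sqrt_le_sqrt (frobSq_mul_le_frobSq A hΨ)

theorem frobNorm_mul_le_sqrt_mul_singularValue_zero (A : Matrix m n ℝ) {k : ℕ}
    {Ψ : Matrix n (Fin k) ℝ} (hΨ : Ψᵀ * Ψ = 1) (hk : k ≤ Fintype.card n) :
    frobNorm (A * Ψ) ≤ √k * singularValue A 0 := by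
  have hsq : frobSq (A * Ψ) ≤ k * singularValue A 0 ^ 2 :=
    calc frobSq (A * Ψ) ≤ ∑ i : Fin k, singularValue A i ^ 2 :=
          frobSq_mul_le_sum_sq_singularValue A hΨ hk
      _ ≤ ∑ _i : Fin k, singularValue A 0 ^ 2 := Finset.sum_le_sum fun i _ =>
          pow_le_pow_left₀ (singularValue_nonneg A i)
            (singularValue_le_singularValue_zero A (i.2.trans_le hk)) 2
      _ = k * singularValue A 0 ^ 2 := by simp
  calc frobNorm (A * Ψ) = √(frobSq (A * Ψ)) := rfl
    _ ≤ √(k * singularValue A 0 ^ 2) := Real.sqrt_le_sqrt hsq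
    _ = √k * singularValue A 0 := by
        rw [Real.sqrt_mul k.cast_nonneg, Real.sqrt_sq (singularValue_nonneg A 0)]

end SingularValue

theorem stmt_17_general {k₁ k₂ : ℕ} (A₁ A₂ : Matrix (Fin k₁) (Fin k₂) ℝ)
    (k : ℕ) (hk : k ≤ min k₁ k₂)
    (Ψ₁ Ψ₂ : Matrix (Fin k₂) (Fin k) ℝ)
    (hΨ₁orth : ∀ i j, ∑ x, Ψ₁ x i * Ψ₁ x j = if i = j then (1 : ℝ) else 0)
    (hΨ₂orth : ∀ i j, ∑ x, Ψ₂ x i * Ψ₂ x j = if i = j then (1 : ℝ) else 0)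
    (hΨ₁eig : ∀ i : Fin k,
        (A₁ᵀ * A₁).mulVec (fun x => Ψ₁ x i) = fun x => singularValue A₁ (i : ℕ) ^ 2 * Ψ₁ x i)
    (hΨ₂eig : ∀ i : Fin k,
        (A₂ᵀ * A₂).mulVec (fun x => Ψ₂ x i) = fun x => singularValue A₂ (i : ℕ) ^ 2 * Ψ₂ x i) :
    (0 ≤ frobSq (A₁ * Ψ₁) - frobSq (A₁ * Ψ₂)) ∧
    (frobSq (A₁ * Ψ₁) - frobSq (A₁ * Ψ₂)
        ≤ 4 * (k : ℝ) * singularValue A₁ 0 * singularValue (A₁ - A₂) 0) ∧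
    (frobSq (A₁ * Ψ₁) - frobSq (A₁ * Ψ₂)
        ≤ 4 * Real.sqrt (k : ℝ) * singularValue A₁ 0 * frobNorm (A₁ - A₂)) := by
  have hk₂ : k ≤ Fintype.card (Fin k₂) := by simpa using hk.trans (min_le_right _ _)
  have h₁ := (transpose_mul_self_eq_one_iff Ψ₁).2 hΨ₁orth
  have h₂ := (transpose_mul_self_eq_one_iff Ψ₂).2 hΨ₂orth
  have hA₁ : frobSq (A₁ * Ψ₂) ≤ frobSq (A₁ * Ψ₁) :=
    frobSq_mul_eq_sum_of_mulVec_eq A₁ h₁ _ hΨ₁eig ▸ frobSq_mul_le_sum_sq_singularValue A₁ h₂ hk₂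
  have hA₂ : frobSq (A₂ * Ψ₁) ≤ frobSq (A₂ * Ψ₂) :=
    frobSq_mul_eq_sum_of_mulVec_eq A₂ h₂ _ hΨ₂eig ▸ frobSq_mul_le_sum_sq_singularValue A₂ h₁ hk₂
  have hs := frobNorm_mul_le_sqrt_mul_singularValue_zero A₁ h₁ hk₂
  refine ⟨sub_nonneg.2 hA₁, ?_, ?_⟩
  · calc _ ≤ 4 * (√k * singularValue A₁ 0) * (√k * singularValue (A₁ - A₂) 0) :=
          frobSq_sub_frobSq_le hA₁ hA₂ hs
            (frobNorm_mul_le_sqrt_mul_singularValue_zero _ h₁ hk₂)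
            (frobNorm_mul_le_sqrt_mul_singularValue_zero _ h₂ hk₂)
      _ = 4 * (√k * √k) * singularValue A₁ 0 * singularValue (A₁ - A₂) 0 := by ring
      _ = _ := by rw [Real.mul_self_sqrt k.cast_nonneg]
  · exact (frobSq_sub_frobSq_le hA₁ hA₂ hs (frobNorm_mul_le_frobNorm _ h₁)
      (frobNorm_mul_le_frobNorm _ h₂)).trans_eq (by ring)

theorem stmt_17 {k₁ k₂ : ℕ} (A₁ A₂ : Matrix (Fin k₁) (Fin k₂) ℝ)
    (k : ℕ) (hk1 : 1 ≤ k) (hk : k ≤ min k₁ k₂)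
    (Ψ₁ Ψ₂ : Matrix (Fin k₂) (Fin k) ℝ)
    (hΨ₁orth : ∀ i j, ∑ x, Ψ₁ x i * Ψ₁ x j = if i = j then (1 : ℝ) else 0)
    (hΨ₂orth : ∀ i j, ∑ x, Ψ₂ x i * Ψ₂ x j = if i = j then (1 : ℝ) else 0)
    (hΨ₁eig : ∀ i : Fin k,
        (A₁ᵀ * A₁).mulVec (fun x => Ψ₁ x i) = fun x => singularValue A₁ (i : ℕ) ^ 2 * Ψ₁ x i)
    (hΨ₂eig : ∀ i : Fin k,
        (A₂ᵀ * A₂).mulVec (fun x => Ψ₂ x i) = fun x => singularValue A₂ (i : ℕ) ^ 2 * Ψ₂ x i) :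
    (0 ≤ frobSq (A₁ * Ψ₁) - frobSq (A₁ * Ψ₂)) ∧
    (frobSq (A₁ * Ψ₁) - frobSq (A₁ * Ψ₂)
        ≤ 4 * (k : ℝ) * singularValue A₁ 0 * singularValue (A₁ - A₂) 0) ∧
    (frobSq (A₁ * Ψ₁) - frobSq (A₁ * Ψ₂)
        ≤ 4 * Real.sqrt (k : ℝ) * singularValue A₁ 0 * frobNorm (A₁ - A₂)) :=
  stmt_17_general A₁ A₂ k hk Ψ₁ Ψ₂ hΨ₁orth hΨ₂orth hΨ₁eig hΨ₂eig
end
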